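/- arXiv:math/0510155 — 6 statements merged into one kernel-verified Lean document; each statement's English description precedes it below -/
import Mathlib

section
/- For every n ≥ 1, P(n)² = Σ_{k=1}^n S(n,k) · k! · F₁₁₁₁(k), where S(n,k) are the Stirling numbers of the second kind. -/
open scoped BigOperators

/-- A zero-one matrix (entries in `Bool`) with no zero rows and no zero columns. -/
def IsIncidence {k l : ℕ} (M : Matrix (Fin k) (Fin l) Bool) : Prop :=
  (∀ i, ∃ j, M i j = true) ∧ (∀ j, ∃ i, M i j = true)

/-- The number of entries equal to one in a zero-one matrix. -/
def numOnes {k l : ℕ} (M : Matrix (Fin k) (Fin l) Bool) : ℕ :=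
  (Finset.univ.filter fun p : Fin k × Fin l => M p.1 p.2 = true).card

/-- `F₁₁₁₁ n`: the number of incidence matrices (of any size) with exactly `n` ones. -/
noncomputable def F1111 (n : ℕ) : ℕ :=
  Nat.card {A : Σ k l : ℕ, Matrix (Fin k) (Fin l) Bool //
    IsIncidence A.2.2 ∧ numOnes A.2.2 = n}

noncomputable def mIJ (i j n : ℕ) : ℕ :=
  Nat.card {M : Matrix (Fin i) (Fin j) Bool // IsIncidence M ∧ numOnes M = n}

/-- total preorders on `Fin n` -/
noncomputable def numPreorders (n : ℕ) : ℕ :=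
  Nat.card {R : Fin n → Fin n → Prop //
    (∀ x, R x x) ∧ (∀ x y z, R x y → R y z → R x z) ∧ (∀ x y, R x y ∨ x = y ∨ R y x)}

noncomputable def numPreordersWithBlocks (n k : ℕ) : ℕ :=
  Nat.card {R : Fin n → Fin n → Prop //
    ((∀ x, R x x) ∧ (∀ x y z, R x y → R y z → R x z) ∧ (∀ x y, R x y ∨ x = y ∨ R y x)) ∧
    Nat.card (Quot fun x y => R x y ∧ R y x) = k}

noncomputable def S11 (n : ℕ) : ℕ :=
  Nat.card {A : Σ k : ℕ, Matrix (Fin k) (Fin k) Bool //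
    (∀ i j, A.2 i j = A.2 j i) ∧ IsIncidence A.2 ∧ numOnes A.2 = n}

def trSigma : (Σ k l : ℕ, Matrix (Fin k) (Fin l) Bool) → (Σ k l : ℕ, Matrix (Fin k) (Fin l) Bool) :=
  fun A => ⟨A.2.1, A.1, A.2.2.transpose⟩

noncomputable def Phi11 (n : ℕ) : ℕ :=
  Nat.card (Quot fun x y : {A : Σ k l : ℕ, Matrix (Fin k) (Fin l) Bool //
    IsIncidence A.2.2 ∧ numOnes A.2.2 = n} => trSigma x.1 = y.1)

noncomputable def F1011 (n : ℕ) : ℕ :=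
  Nat.card {A : Σ k l : ℕ, Matrix (Fin k) (Fin l) Bool //
    IsIncidence A.2.2 ∧ numOnes A.2.2 = n ∧
    ∀ i i' : Fin A.1, (∀ j, A.2.2 i j = A.2.2 i' j) → i = i'}

noncomputable def F0001 (n : ℕ) : ℕ :=
  Nat.card (Quot fun x y : {A : Σ k l : ℕ, Matrix (Fin k) (Fin l) Bool //
      IsIncidence A.2.2 ∧ numOnes A.2.2 = n ∧
      ∀ i i' : Fin A.1, (∀ j, A.2.2 i j = A.2.2 i' j) → i = i'} =>
    ∃ σ : Equiv.Perm (Fin x.1.1), ∃ τ : Equiv.Perm (Fin x.1.2.1),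
      y.1 = ⟨x.1.1, x.1.2.1, Matrix.of fun i j => x.1.2.2 (σ i) (τ j)⟩)

noncomputable def numInvolutions (n : ℕ) : ℕ :=
  Nat.card {σ : Equiv.Perm (Fin n) // σ * σ = 1}

/-- number of cycles of a permutation, counting fixed points as cycles -/
def numCycles {n : ℕ} (σ : Equiv.Perm (Fin n)) : ℕ :=
  Multiset.card σ.cycleType + (n - σ.support.card)

/-- unsigned Stirling number of the first kind: permutations of `n` with `k` cycles -/
noncomputable def stirling1Unsigned (n k : ℕ) : ℕ :=
  Nat.card {σ : Equiv.Perm (Fin n) // numCycles σ = k}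

/-- Stirling number of the second kind: partitions of an `n`-set into `k` blocks -/
noncomputable def stirling2 (n k : ℕ) : ℕ :=
  Nat.card {c : Setoid (Fin n) // Nat.card (Quotient c) = k}

noncomputable def sSym (k n : ℕ) : ℕ :=
  Nat.card {M : Matrix (Fin k) (Fin k) Bool // (∀ a b, M a b = M b a) ∧ numOnes M = n}

noncomputable def muSym (i n : ℕ) : ℕ :=
  Nat.card {M : Matrix (Fin i) (Fin i) Bool //
    (∀ a b, M a b = M b a) ∧ IsIncidence M ∧ numOnes M = n}


/-!
A total preorder on `Fin n` is the same as a surjection `f` of `Fin n` onto some `Fin a`, listing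
its blocks in increasing order. A pair `(f, g)` of such surjections is the same as the set of
values `(f x, g x)` it attains, which is an `a × b` incidence matrix `M`, together with the
surjection `x ↦ (f x, g x)` of `Fin n` onto the ones of `M`. Grouping these pairs by the number
`k` of ones of `M`, and counting surjections `Fin n → Fin k` as `S(n, k) k!` (a kernel with `k`
classes, then a bijection of its quotient with `Fin k`), gives the formula.
-/

open Function Finset

section Surjections

variable {α β γ : Type*}

instance Setoid.finite [Finite α] : Finite (Setoid α) :=
  Finite.of_injective (fun c : Setoid α => ⇑c) fun _ _ => Setoid.eq_iff_rel_eq.2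

noncomputable def Setoid.kerFiberEquiv (c : Setoid α) :
    {f : {f : α → β // Surjective f} // Setoid.ker f.1 = c} ≃ (Quotient c ≃ β) where
  toFun f := (Quotient.congrRight (Setoid.ext_iff.1 f.2.symm)).trans
    (Setoid.quotientKerEquivOfSurjective f.1.1 f.1.2)
  invFun e := ⟨⟨e ∘ Quotient.mk c, e.surjective.comp Quotient.mk_surjective⟩,
    Setoid.ext fun _ _ => e.injective.eq_iff.trans Quotient.eq⟩
  left_inv _ := rfl
  right_inv _ := Equiv.ext fun q => Quotient.inductionOn q fun _ => rfl

theorem Nat.card_equiv [Finite α] [Finite β] :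
    Nat.card (α ≃ β) = if Nat.card α = Nat.card β then (Nat.card β).factorial else 0 := by
  classical
  split_ifs with h
  · have := Fintype.ofFinite α
    have := Fintype.ofFinite β
    rw [Nat.card_eq_fintype_card, Fintype.card_equiv (Finite.card_eq.1 h).some, ← h,
      Nat.card_eq_fintype_card]
  · have : IsEmpty (α ≃ β) := ⟨fun e => h (Nat.card_congr e)⟩
    exact Nat.card_of_isEmpty

theorem Nat.card_surjective [Finite α] [Finite β] :
    Nat.card {f : α → β // Surjective f} =
      Nat.card {c : Setoid α // Nat.card (Quotient c) = Nat.card β} *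
        (Nat.card β).factorial := by
  classical
  have := Fintype.ofFinite (Setoid α)
  rw [← Nat.card_congr (Equiv.sigmaFiberEquiv
    fun f : {f : α → β // Surjective f} => Setoid.ker f.1), Nat.card_sigma]
  simp only [Nat.card_congr (Setoid.kerFiberEquiv _), Nat.card_equiv, sum_ite, sum_const_zero,
    add_zero, sum_const, smul_eq_mul]
  rw [Nat.card_eq_fintype_card (α := Subtype _), Fintype.card_subtype]

theorem card_surjective_fin (n k : ℕ) :
    Nat.card {f : Fin n → Fin k // Surjective f} = stirling2 n k * k.factorial := by
  rw [Nat.card_surjective, Nat.card_fin]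
  rfl

def Equiv.surjectiveCongr (e : β ≃ γ) :
    {f : α → β // Surjective f} ≃ {f : α → γ // Surjective f} :=
  Equiv.subtypeEquiv ((Equiv.refl α).arrowCongr e) fun f => (e.comp_surjective f).symm

end Surjections

section TotalPreorders

variable {α : Type*}

abbrev TotalPreorder (α : Type*) : Type _ :=
  {R : α → α → Prop // (∀ x, R x x) ∧ (∀ x y z, R x y → R y z → R x z) ∧
    (∀ x y, R x y ∨ x = y ∨ R y x)}

abbrev OrderedPartition (α : Type*) : Type _ := Σ a : ℕ, {f : α → Fin a // Surjective f}

def OrderedPartition.toTotalPreorder (p : OrderedPartition α) : TotalPreorder α :=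
  ⟨fun x y => p.2.1 x ≤ p.2.1 y, fun _ => le_rfl, fun _ _ _ => le_trans,
    fun x y => (le_total (p.2.1 x) (p.2.1 y)).imp_right Or.inr⟩

theorem exists_orderIso_of_surjective_of_le_iff {β γ : Type*} [LinearOrder β] [LinearOrder γ]
    {f : α → β} {g : α → γ} (hf : Surjective f) (hg : Surjective g)
    (hfg : ∀ x y, f x ≤ f y ↔ g x ≤ g y) : ∃ e : β ≃o γ, ∀ x, e (f x) = g x := by
  set φ : β → γ := g ∘ surjInv hf
  have hφ : ∀ x, φ (f x) = g x := fun x =>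
    le_antisymm ((hfg _ _).1 (surjInv_eq hf _).le) ((hfg _ _).1 (surjInv_eq hf _).ge)
  have hmono : StrictMono φ := fun i j hij => lt_of_not_ge fun hji =>
    hij.not_ge (by simpa only [surjInv_eq hf] using (hfg _ _).2 hji)
  have hsurj : Surjective φ := fun w =>
    let ⟨x, hx⟩ := hg w
    ⟨f x, (hφ x).trans hx⟩
  exact ⟨hmono.orderIsoOfSurjective φ hsurj, hφ⟩

theorem OrderedPartition.toTotalPreorder_injective :
    Injective (OrderedPartition.toTotalPreorder (α := α)) := by
  rintro ⟨a, f, hf⟩ ⟨b, g, hg⟩ h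
  have hfg : ∀ x y, f x ≤ f y ↔ g x ≤ g y := fun x y =>
    iff_of_eq (congrFun₂ (congrArg Subtype.val h) x y)
  obtain ⟨e, he⟩ := exists_orderIso_of_surjective_of_le_iff hf hg hfg
  obtain rfl : a = b := Fin.equiv_iff_eq.1 ⟨e.toEquiv⟩
  obtain rfl : f = g := funext fun x => Fin.ext (by rw [← he, Fin.coe_orderIso_apply])
  rfl

theorem exists_surjective_fin_le_iff [Finite α] {β : Type*} [LinearOrder β] (ρ : α → β) :
    ∃ (a : ℕ) (f : α → Fin a), Surjective f ∧ ∀ x y, f x ≤ f y ↔ ρ x ≤ ρ y := by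
  classical
  have := Fintype.ofFinite α
  set e := (univ.image ρ).orderIsoOfFin rfl
  refine ⟨_, fun x => e.symm ⟨ρ x, mem_image_of_mem ρ (mem_univ x)⟩, ?_, fun x y => ?_⟩
  · intro i
    obtain ⟨x, -, hx⟩ := mem_image.1 (e i).2
    exact ⟨x, by simp [hx]⟩
  · rw [e.symm.le_iff_le, Subtype.mk_le_mk]

theorem TotalPreorder.le_iff_ncard_le [Finite α] (R : TotalPreorder α) (x y : α) :
    R.1 x y ↔ {z | R.1 z x}.ncard ≤ {z | R.1 z y}.ncard := by
  obtain ⟨R, hrefl, htrans, htotal⟩ := R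
  refine ⟨fun hxy => Set.ncard_le_ncard fun z hzx => htrans z x y hzx hxy, fun hle => ?_⟩
  by_contra hxy
  have hyx : R y x := by
    rcases htotal x y with h | rfl | h
    exacts [absurd h hxy, hrefl x, h]
  have hssub : {z | R z y} ⊂ {z | R z x} :=
    Set.ssubset_iff_of_subset (fun z hzy => htrans z y x hzy hyx) |>.2 ⟨x, hrefl x, hxy⟩
  exact (Set.ncard_lt_ncard hssub).not_ge hle

theorem OrderedPartition.toTotalPreorder_surjective [Finite α] :
    Surjective (OrderedPartition.toTotalPreorder (α := α)) := fun R => by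
  obtain ⟨a, f, hf, hle⟩ := exists_surjective_fin_le_iff fun x => {z | R.1 z x}.ncard
  exact ⟨⟨a, f, hf⟩, Subtype.ext <| funext₂ fun x y =>
    propext <| (hle x y).trans (R.le_iff_ncard_le x y).symm⟩

noncomputable def OrderedPartition.equivTotalPreorder [Finite α] :
    OrderedPartition α ≃ TotalPreorder α :=
  .ofBijective _ ⟨toTotalPreorder_injective, toTotalPreorder_surjective⟩

end TotalPreorders

section IncidencePairs

variable {α β γ : Type*}

abbrev Matrix.Ones (M : Matrix α β Bool) : Type _ := {p : α × β // M p.1 p.2 = true}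

theorem Matrix.eq_true_iff_mem_range {M : Matrix α β Bool} {h : γ → M.Ones} (hh : Surjective h)
    (i : α) (j : β) : M i j = true ↔ (i, j) ∈ Set.range fun x => (h x).1 :=
  ⟨fun hij => (hh ⟨(i, j), hij⟩).imp fun _ hx => congrArg Subtype.val hx,
    fun ⟨x, hx⟩ => by
      obtain ⟨rfl, rfl⟩ := Prod.ext_iff.1 hx
      exact (h x).2⟩

abbrev CoveringMatrix (α β : Type*) : Type _ :=
  {M : Matrix α β Bool // (∀ i, ∃ j, M i j = true) ∧ ∀ j, ∃ i, M i j = true}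

def CoveringMatrix.surjectivePair
    (p : Σ M : CoveringMatrix α β, {h : γ → M.1.Ones // Surjective h}) :
    {f : γ → α // Surjective f} × {g : γ → β // Surjective g} :=
  (⟨fun x => (p.2.1 x).1.1, fun i =>
      let ⟨j, hij⟩ := p.1.2.1 i
      (p.2.2 ⟨(i, j), hij⟩).imp fun _ hx => congrArg (·.1.1) hx⟩,
    ⟨fun x => (p.2.1 x).1.2, fun j =>
      let ⟨i, hij⟩ := p.1.2.2 j
      (p.2.2 ⟨(i, j), hij⟩).imp fun _ hx => congrArg (·.1.2) hx⟩)

theorem CoveringMatrix.surjectivePair_injective :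
    Injective (CoveringMatrix.surjectivePair (α := α) (β := β) (γ := γ)) := by
  rintro ⟨⟨M, hM⟩, h, hh⟩ ⟨⟨M', hM'⟩, h', hh'⟩ heq
  have hval : (fun x => (h x).1) = fun x => (h' x).1 := funext fun x =>
    Prod.ext (congrFun (congrArg (·.1.1) heq) x) (congrFun (congrArg (·.2.1) heq) x)
  obtain rfl : M = M' := funext₂ fun i j => Bool.eq_iff_iff.2 <| by
    rw [Matrix.eq_true_iff_mem_range hh, Matrix.eq_true_iff_mem_range hh', hval]
  obtain rfl : h = h' := funext fun x => Subtype.ext (congrFun hval x)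
  rfl

open Classical in
theorem CoveringMatrix.surjectivePair_surjective :
    Surjective (CoveringMatrix.surjectivePair (α := α) (β := β) (γ := γ)) := by
  rintro ⟨⟨f, hf⟩, ⟨g, hg⟩⟩
  let M : Matrix α β Bool := Matrix.of fun i j => decide (∃ x, f x = i ∧ g x = j)
  have hM : ∀ x, M (f x) (g x) = true := fun x => decide_eq_true ⟨x, rfl, rfl⟩
  refine ⟨⟨⟨M, fun i => ?_, fun j => ?_⟩, fun x => ⟨(f x, g x), hM x⟩, ?_⟩, rfl⟩
  · obtain ⟨x, rfl⟩ := hf i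
    exact ⟨g x, hM x⟩
  · obtain ⟨x, rfl⟩ := hg j
    exact ⟨f x, hM x⟩
  · rintro ⟨⟨i, j⟩, hij⟩
    obtain ⟨x, rfl, rfl⟩ := of_decide_eq_true hij
    exact ⟨x, rfl⟩

noncomputable def CoveringMatrix.surjectivePairEquiv :
    {f : γ → α // Surjective f} × {g : γ → β // Surjective g} ≃
      Σ M : CoveringMatrix α β, {h : γ → M.1.Ones // Surjective h} :=
  (Equiv.ofBijective _ ⟨surjectivePair_injective, surjectivePair_surjective⟩).symm

end IncidencePairs

section Counting

variable {α : Type*}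

abbrev IncidencePartition (α : Type*) : Type _ :=
  Σ a b : ℕ, Σ M : CoveringMatrix (Fin a) (Fin b), {h : α → M.1.Ones // Surjective h}

noncomputable def OrderedPartition.prodEquiv :
    OrderedPartition α × OrderedPartition α ≃ IncidencePartition α where
  toFun p := ⟨p.1.1, p.2.1, CoveringMatrix.surjectivePairEquiv (p.1.2, p.2.2)⟩
  invFun q := (⟨q.1, (CoveringMatrix.surjectivePairEquiv.symm q.2.2).1⟩,
    ⟨q.2.1, (CoveringMatrix.surjectivePairEquiv.symm q.2.2).2⟩)
  left_inv p := by simp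
  right_inv q := by simp

noncomputable def Matrix.onesEquivFin {a b k : ℕ} {M : Matrix (Fin a) (Fin b) Bool}
    (hM : numOnes M = k) : M.Ones ≃ Fin k :=
  Fintype.equivFinOfCardEq (by rw [Fintype.card_subtype]; exact hM)

noncomputable def IncidencePartition.fiberEquiv (k : ℕ) :
    {x : IncidencePartition α // numOnes x.2.2.1.1 = k} ≃
      {A : Σ a b : ℕ, Matrix (Fin a) (Fin b) Bool // IsIncidence A.2.2 ∧ numOnes A.2.2 = k} ×
        {f : α → Fin k // Surjective f} where
  toFun x := (⟨⟨x.1.1, x.1.2.1, x.1.2.2.1.1⟩, x.1.2.2.1.2, x.2⟩,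
    (Matrix.onesEquivFin x.2).surjectiveCongr x.1.2.2.2)
  invFun y := ⟨⟨y.1.1.1, y.1.1.2.1, ⟨y.1.1.2.2, y.1.2.1⟩,
    (Matrix.onesEquivFin y.1.2.2).surjectiveCongr.symm y.2⟩, y.1.2.2⟩
  left_inv := by
    rintro ⟨⟨a, b, ⟨M, hM⟩, h⟩, rfl⟩
    simp
  right_inv := by
    rintro ⟨⟨⟨a, b, M⟩, hM, rfl⟩, f⟩
    simp

theorem IncidencePartition.numOnes_mem_Icc {n : ℕ} (hn : 1 ≤ n)
    (x : IncidencePartition (Fin n)) : numOnes x.2.2.1.1 ∈ Icc 1 n := by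
  obtain ⟨a, b, ⟨M, hM⟩, h, hh⟩ := x
  have hcard : Fintype.card M.Ones = numOnes M := Fintype.card_subtype _
  have hpos : 0 < Fintype.card M.Ones := Fintype.card_pos_iff.2 ⟨h ⟨0, hn⟩⟩
  have hle := Fintype.card_le_of_surjective h hh
  rw [Fintype.card_fin] at hle
  exact mem_Icc.2 ⟨hcard ▸ hpos, hcard ▸ hle⟩

theorem Nat.card_eq_sum_card_fiber {X ι : Type*} [Finite X] (π : X → ι) (s : Finset ι)
    (hs : ∀ x, π x ∈ s) : Nat.card X = ∑ i ∈ s, Nat.card {x // π x = i} := by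
  classical
  have := Fintype.ofFinite X
  simp only [Nat.card_eq_fintype_card, Fintype.card_subtype]
  exact card_eq_sum_card_fiberwise fun x _ => hs x

end Counting

/-- `P(n)² = Σ_{k=1}^n S(n,k) k! F₁₁₁₁(k)`. -/
theorem numPreorders_sq_eq (n : ℕ) (hn : 1 ≤ n) :
    numPreorders n ^ 2 =
      ∑ k ∈ Finset.Icc 1 n, stirling2 n k * k.factorial * F1111 k := by
  let e : TotalPreorder (Fin n) × TotalPreorder (Fin n) ≃ IncidencePartition (Fin n) :=
    (OrderedPartition.equivTotalPreorder.prodCongr OrderedPartition.equivTotalPreorder).symm.trans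
      OrderedPartition.prodEquiv
  have : Finite (IncidencePartition (Fin n)) := .of_equiv _ e
  calc numPreorders n ^ 2 = Nat.card (IncidencePartition (Fin n)) := by
        rw [sq, numPreorders, ← Nat.card_prod, Nat.card_congr e]
    _ = ∑ k ∈ Icc 1 n, Nat.card {x : IncidencePartition (Fin n) // numOnes x.2.2.1.1 = k} :=
        Nat.card_eq_sum_card_fiber _ _ (IncidencePartition.numOnes_mem_Icc hn)
    _ = ∑ k ∈ Icc 1 n, stirling2 n k * k.factorial * F1111 k := sum_congr rfl fun k _ => by
        rw [Nat.card_congr (IncidencePartition.fiberEquiv k), Nat.card_prod, card_surjective_fin,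
          F1111, mul_comm]
end

section
/- For all complex (or real) z with |z| < log 2, the series Σ_{n=0}^∞ P(n) zⁿ / n! converges and equals 1/(2 − e^z). -/
open scoped BigOperators

/-!
A weak order on a nonempty finite set `α` is determined by the set `S ≠ α` of its non-maximal
elements together with its restriction to `S`: the maximal elements form a single top block.
Summing over `S` gives `2 P(n) = ∑ₖ C(n, k) P(k)` for `n ≥ 1`, i.e. `aₙ = P(n) / n!` satisfies
`(∑ aₙ zⁿ) · e^z = 2 ∑ aₙ zⁿ - 1` coefficientwise. The same recursion shows `aₙ (log 2)ⁿ ≤ 1`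
by strong induction, because `∑_{m ≥ 1} (log 2)ᵐ / m! = e^{log 2} - 1 = 1`; hence the series
converges absolutely for `‖z‖ < log 2`, and the Cauchy product with the exponential series
identifies its sum as `1 / (2 - e^z)`.
-/

open Finset Function
open scoped Nat

def IsWeakOrder {α : Type*} (R : α → α → Prop) : Prop :=
  (∀ x, R x x) ∧ (∀ x y z, R x y → R y z → R x z) ∧ (∀ x y, R x y ∨ x = y ∨ R y x)

abbrev WeakOrders (α : Type*) := {R : α → α → Prop // IsWeakOrder R}

namespace IsWeakOrder

variable {α β : Type*} {R : α → α → Prop}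

lemma total (h : IsWeakOrder R) (x y : α) : R x y ∨ R y x := by
  rcases h.2.2 x y with hxy | rfl | hyx
  exacts [.inl hxy, .inl (h.1 x), .inr hyx]

lemma comap (h : IsWeakOrder R) {f : β → α} (hf : Injective f) :
    IsWeakOrder fun x y => R (f x) (f y) :=
  ⟨fun _ => h.1 _, fun _ _ _ => h.2.1 _ _ _,
    fun x y => (h.2.2 (f x) (f y)).imp_right (Or.imp_left (@hf x y))⟩

lemma exists_forall_rel_top [Finite α] [Nonempty α] (h : IsWeakOrder R) : ∃ m, ∀ y, R y m := by
  let _ : Preorder α := { le := R, le_refl := h.1, le_trans := h.2.1 }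
  have := Fintype.ofFinite α
  obtain ⟨m, -, hm⟩ := (univ : Finset α).exists_maximal univ_nonempty
  exact ⟨m, fun y => (h.total y m).elim id fun hmy => hm (mem_univ y) hmy⟩

end IsWeakOrder

def weakOrdersCongr {α β : Type*} (e : α ≃ β) : WeakOrders α ≃ WeakOrders β :=
  (e.arrowCongr (e.arrowCongr (Equiv.refl Prop))).subtypeEquiv fun R =>
    ⟨fun h => h.comap e.symm.injective, fun h => by simpa using h.comap e.injective⟩

lemma numPreorders_eq_nat_card (n : ℕ) : numPreorders n = Nat.card (WeakOrders (Fin n)) := rfl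

lemma numPreorders_zero : numPreorders 0 = 1 := by
  simp [numPreorders]

lemma nat_card_weakOrders (α : Type*) [Finite α] :
    Nat.card (WeakOrders α) = numPreorders (Nat.card α) :=
  Nat.card_congr (weakOrdersCongr (Finite.equivFin α))

section TopBlock

variable {α : Type*}

def extendTop (S : Finset α) (R : S → S → Prop) : α → α → Prop :=
  fun x y => y ∉ S ∨ ∃ (hx : x ∈ S) (hy : y ∈ S), R ⟨x, hx⟩ ⟨y, hy⟩

lemma IsWeakOrder.extendTop {S : Finset α} {R : S → S → Prop} (h : IsWeakOrder R) :
    IsWeakOrder (extendTop S R) := by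
  refine ⟨fun x => ?_, fun x y z => ?_, fun x y => ?_⟩
  · by_cases hx : x ∈ S
    exacts [.inr ⟨hx, hx, h.1 _⟩, .inl hx]
  · rintro (hy | ⟨hx, hy, hxy⟩) (hz | ⟨hy', hz, hyz⟩)
    exacts [.inl hz, absurd hy' hy, .inl hz, .inr ⟨hx, hz, h.2.1 _ _ _ hxy hyz⟩]
  · by_cases hx : x ∈ S <;> by_cases hy : y ∈ S
    · rcases h.2.2 ⟨x, hx⟩ ⟨y, hy⟩ with hxy | hxy | hyx
      exacts [.inl (.inr ⟨hx, hy, hxy⟩), .inr (.inl (congrArg Subtype.val hxy)),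
        .inr (.inr (.inr ⟨hy, hx, hyx⟩))]
    exacts [.inl (.inl hy), .inr (.inr (.inl hx)), .inl (.inl hy)]

variable [Fintype α]

open scoped Classical in
noncomputable def nonTop (R : α → α → Prop) : Finset α := {x | ∃ y, ¬R y x}

lemma mem_nonTop {R : α → α → Prop} {x : α} : x ∈ nonTop R ↔ ∃ y, ¬R y x := by
  simp [nonTop]

lemma nonTop_ne_univ [Nonempty α] {R : α → α → Prop} (h : IsWeakOrder R) : nonTop R ≠ univ := by
  obtain ⟨m, hm⟩ := h.exists_forall_rel_top
  intro hR
  obtain ⟨y, hy⟩ := mem_nonTop.1 (hR ▸ mem_univ m)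
  exact hy (hm y)

variable {S : Finset α} {R : S → S → Prop}

lemma nonTop_extendTop (hS : S ≠ univ) : nonTop (extendTop S R) = S := by
  obtain ⟨t, -, ht⟩ := exists_of_ssubset (ssubset_univ_iff.2 hS)
  ext x
  by_cases hx : x ∈ S
  · simpa [mem_nonTop, extendTop, hx] using ⟨t, fun ht' => absurd ht' ht⟩
  · simp [mem_nonTop, extendTop, hx]

lemma extendTop_nonTop {R : α → α → Prop} (h : IsWeakOrder R) :
    extendTop (nonTop R) (fun x y => R x y) = R := by
  ext x y
  simp only [extendTop, mem_nonTop, not_exists, not_not]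
  refine ⟨?_, fun hxy => ?_⟩
  · rintro (hy | ⟨-, -, hxy⟩)
    exacts [hy x, hxy]
  by_cases hy : ∀ z, R z y
  · exact .inl hy
  · obtain ⟨w, hw⟩ := not_forall.1 hy
    exact .inr ⟨⟨w, fun hwx => hw (h.2.1 _ _ _ hwx hxy)⟩, ⟨w, hw⟩, hxy⟩

noncomputable def fiberNonTopEquiv (S : Finset α) (hS : S ≠ univ) :
    {R : WeakOrders α // nonTop R.1 = S} ≃ WeakOrders S where
  toFun R := ⟨fun x y => R.1.1 x y, R.1.2.comap Subtype.val_injective⟩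
  invFun R := ⟨⟨extendTop S R.1, R.2.extendTop⟩, nonTop_extendTop hS⟩
  left_inv := by
    rintro ⟨⟨R, hR⟩, rfl⟩
    simp only [extendTop_nonTop hR]
  right_inv R := by
    ext x y
    simp [extendTop]

lemma nat_card_weakOrders_add [Nonempty α] :
    Nat.card (WeakOrders α) + numPreorders (Fintype.card α) = ∑ S : Finset α, numPreorders #S := by
  classical
  have hfiber : ∀ S ∈ univ.erase univ,
      Nat.card {R : WeakOrders α // nonTop R.1 = S} = numPreorders #S := by
    intro S hS
    rw [Nat.card_congr (fiberNonTopEquiv S (ne_of_mem_erase hS)), nat_card_weakOrders,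
      Nat.card_eq_finsetCard]
  have hempty : IsEmpty {R : WeakOrders α // nonTop R.1 = univ} :=
    ⟨fun R => nonTop_ne_univ R.1.2 R.2⟩
  rw [Nat.card_congr (Equiv.sigmaFiberEquiv fun R : WeakOrders α => nonTop R.1).symm,
    Nat.card_sigma, ← sum_erase_add _ _ (mem_univ univ), ← sum_erase_add _ _ (mem_univ univ),
    Nat.card_of_isEmpty, add_zero, sum_congr rfl hfiber, card_univ]

end TopBlock

theorem sum_choose_mul_numPreorders (n : ℕ) :
    ∑ k ∈ range (n + 1), n.choose k * numPreorders k + (if n = 0 then 1 else 0) =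
      2 * numPreorders n := by
  rcases n with _ | n
  · simp [numPreorders_zero]
  · have h := nat_card_weakOrders_add (α := Fin (n + 1))
    rw [← powerset_univ, sum_powerset_apply_card] at h
    simp only [card_univ, Fintype.card_fin, smul_eq_mul, ← numPreorders_eq_nat_card] at h
    rw [if_neg n.succ_ne_zero, ← h]
    ring

theorem sum_numPreorders_div_factorial {K : Type*} [Field K] [CharZero K] (n : ℕ) :
    ∑ k ∈ range (n + 1), (numPreorders k : K) / k ! / (n - k)! =
      2 * ((numPreorders n : K) / n !) - if n = 0 then 1 else 0 := by
  have hfact : ∀ m : ℕ, (m ! : K) ≠ 0 := fun m => Nat.cast_ne_zero.2 m.factorial_ne_zero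
  have hsum : ∑ k ∈ range (n + 1), (numPreorders k : K) / k ! / (n - k)! =
      (∑ k ∈ range (n + 1), (n.choose k * numPreorders k : ℕ)) / n ! := by
    rw [Nat.cast_sum, sum_div]
    refine sum_congr rfl fun k hk => ?_
    rw [Nat.cast_mul, Nat.cast_choose K (mem_range_succ_iff.1 hk)]
    field_simp [hfact]
  have hnat := sum_choose_mul_numPreorders n
  rw [hsum, eq_sub_iff_add_eq]
  split_ifs at hnat ⊢ with h0
  · subst h0
    simp [numPreorders_zero, one_add_one_eq_two]
  · rw [add_zero] at hnat ⊢
    rw [hnat]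
    push_cast
    ring

lemma sum_range_pow_sub_div_factorial_le {x : ℝ} (hx : 0 ≤ x) (n : ℕ) :
    ∑ k ∈ range n, x ^ (n - k) / (n - k)! ≤ Real.exp x - 1 := by
  have hreflect :
      ∑ k ∈ range n, x ^ (n - k) / (n - k)! = ∑ j ∈ range n, x ^ (j + 1) / (j + 1)! := by
    rw [← sum_range_reflect]
    refine sum_congr rfl fun j hj => ?_
    rw [show n - (n - 1 - j) = j + 1 by have := mem_range.1 hj; omega]
  have := Real.sum_le_exp_of_nonneg hx (n + 1)
  rw [sum_range_succ'] at this
  simp only [pow_zero, Nat.factorial_zero, Nat.cast_one, div_one] at this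
  linarith

lemma mul_log_two_pow_le_one {a : ℕ → ℝ}
    (hrec : ∀ n, ∑ k ∈ range (n + 1), a k / (n - k)! = 2 * a n - if n = 0 then 1 else 0)
    (n : ℕ) : a n * Real.log 2 ^ n ≤ 1 := by
  induction n using Nat.strong_induction_on with
  | _ n ih =>
  have hrec' := hrec n
  rw [sum_range_succ, Nat.sub_self, Nat.factorial_zero, Nat.cast_one, div_one] at hrec'
  rcases n.eq_zero_or_pos with rfl | hn
  · simp only [pow_zero, mul_one]
    rw [sum_range_zero, if_pos rfl] at hrec'
    linarith
  have ha : a n = ∑ k ∈ range n, a k / (n - k)! := by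
    rw [if_neg hn.ne'] at hrec'
    linarith
  have hlog : 0 ≤ Real.log 2 := Real.log_nonneg one_le_two
  calc a n * Real.log 2 ^ n
      = ∑ k ∈ range n, a k * Real.log 2 ^ k * (Real.log 2 ^ (n - k) / (n - k)!) := by
        rw [ha, sum_mul]
        refine sum_congr rfl fun k hk => ?_
        rw [← pow_mul_pow_sub _ (mem_range.1 hk).le]
        ring
    _ ≤ ∑ k ∈ range n, Real.log 2 ^ (n - k) / (n - k)! :=
        sum_le_sum fun k hk => mul_le_of_le_one_left (by positivity) (ih k (mem_range.1 hk))
    _ ≤ Real.exp (Real.log 2) - 1 := sum_range_pow_sub_div_factorial_le hlog n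
    _ = 1 := by rw [Real.exp_log two_pos]; norm_num

lemma hasSum_mul_pow_of_sum_div_factorial {a : ℕ → ℂ} {z : ℂ}
    (hrec : ∀ n, ∑ k ∈ range (n + 1), a k / (n - k)! = 2 * a n - if n = 0 then 1 else 0)
    (ha : Summable fun n => ‖a n * z ^ n‖) (hz : Complex.exp z ≠ 2) :
    HasSum (fun n => a n * z ^ n) (1 / (2 - Complex.exp z)) := by
  have hconv : ∀ n, ∑ k ∈ range (n + 1), a k * z ^ k * (z ^ (n - k) / (n - k)!) =
      2 * (a n * z ^ n) - if n = 0 then 1 else 0 := by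
    intro n
    calc _ = z ^ n * ∑ k ∈ range (n + 1), a k / (n - k)! := by
          rw [mul_sum]
          refine sum_congr rfl fun k hk => ?_
          rw [← pow_mul_pow_sub z (mem_range_succ_iff.1 hk)]
          ring
      _ = _ := by
          rw [hrec]
          split_ifs with h <;> simp [h]; ring
  have hprod := hasSum_sum_range_mul_of_summable_norm ha
    (NormedSpace.norm_expSeries_div_summable z)
  rw [(NormedSpace.expSeries_div_hasSum_exp z).tsum_eq, ← Complex.exp_eq_exp_ℂ] at hprod
  simp_rw [hconv] at hprod
  have hS := ha.of_norm.hasSum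
  have hprod_eq : (∑' n, a n * z ^ n) * Complex.exp z = 2 * ∑' n, a n * z ^ n - 1 :=
    hprod.unique ((hS.mul_left 2).sub (hasSum_ite_eq 0 1))
  have hval : ∑' n, a n * z ^ n = 1 / (2 - Complex.exp z) := by
    rw [eq_div_iff (sub_ne_zero.2 hz.symm)]
    linear_combination -hprod_eq
  exact hval ▸ hS

lemma Complex.exp_ne_two_of_norm_lt_log_two {z : ℂ} (hz : ‖z‖ < Real.log 2) :
    Complex.exp z ≠ 2 := by
  intro h
  have := (Complex.norm_exp_le_exp_norm z).trans_lt (Real.exp_lt_exp.2 hz)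
  rw [h, Real.exp_log two_pos] at this
  norm_num at this

/-- for `|z| < log 2`, `Σ_{n≥0} P(n) zⁿ/n!` converges to `1/(2 - e^z)`. -/
theorem numPreorders_egf (z : ℂ) (hz : ‖z‖ < Real.log 2) :
    HasSum (fun n : ℕ => (numPreorders n : ℂ) * z ^ n / (n.factorial : ℂ))
      (1 / (2 - Complex.exp z)) := by
  have hbound := mul_log_two_pow_le_one (sum_numPreorders_div_factorial (K := ℝ))
  have hlog : 0 < Real.log 2 := Real.log_pos one_lt_two
  have hsummable : Summable fun n => ‖(numPreorders n : ℂ) / n ! * z ^ n‖ := by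
    refine (summable_geometric_of_lt_one (by positivity) ((div_lt_one hlog).2 hz)).of_nonneg_of_le
      (fun n => norm_nonneg _) fun n => ?_
    calc ‖(numPreorders n : ℂ) / n ! * z ^ n‖
        = (numPreorders n / n ! : ℝ) * Real.log 2 ^ n * (‖z‖ / Real.log 2) ^ n := by
          rw [div_pow, mul_assoc, mul_div_cancel₀ _ (by positivity)]
          simp
      _ ≤ (‖z‖ / Real.log 2) ^ n := mul_le_of_le_one_left (by positivity) (hbound n)
  simpa only [mul_div_right_comm] using hasSum_mul_pow_of_sum_div_factorial
    sum_numPreorders_div_factorial hsummable (Complex.exp_ne_two_of_norm_lt_log_two hz)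
end

section
/- As n → ∞, Φ₁₁(n) ∼ (1/2) · F₁₁₁₁(n). -/
open scoped BigOperators

/-! Transposition is an involution on the finite set of incidence matrices with `n` ones and
`Φ₁₁(n)` counts its orbits, so `F₁₁₁₁(n) ≤ 2 Φ₁₁(n) ≤ F₁₁₁₁(n) + S(n)`, where `S(n)` is the number
of symmetric ones. Permutation matrices give `F₁₁₁₁(n) ≥ n!`. A symmetric matrix is determined by
its size, its diagonal and the at most `n / 2` ones above its diagonal, whence
`(n / 2)! S(n) ≤ 8ⁿ nⁿ`, so that `S(n) = o(n!) = o(F₁₁₁₁(n))`. -/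

open Finset Function Filter Topology
open scoped Nat

namespace Function

variable {α : Type*}

namespace Involutive

variable {f : α → α}

theorem quot_mk_eq_mk_iff (hf : Involutive f) {x y : α} :
    Quot.mk (fun a b => f a = b) x = Quot.mk _ y ↔ y = x ∨ y = f x := by
  have hequiv : Equivalence fun x y : α => y = x ∨ y = f x :=
    ⟨fun _ => Or.inl rfl,
      fun {x y} h => h.elim (fun h => Or.inl h.symm) fun h => Or.inr (by rw [h, hf]),
      fun {x y z} hxy hyz => by
        rcases hxy with rfl | rfl
        · exact hyz
        · exact (hyz.imp_right fun h => h.trans (hf x)).symm⟩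
  rw [Quot.eq]
  refine ⟨fun h => hequiv.eqvGen_iff.1 (h.mono fun a b hab => Or.inr hab.symm), ?_⟩
  rintro (rfl | rfl)
  exacts [.refl _, .rel _ _ rfl]

variable [Finite α]

theorem card_le_two_mul_card_quot (hf : Involutive f) :
    Nat.card α ≤ 2 * Nat.card (Quot fun a b : α => f a = b) := by
  classical
  have := Fintype.ofFinite α
  have := Fintype.ofFinite (Quot fun a b : α => f a = b)
  rw [Nat.card_eq_fintype_card, Nat.card_eq_fintype_card, ← card_univ, ← card_univ]
  refine (card_le_mul_card_image (f := Quot.mk _) univ 2 fun q _ => ?_).trans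
    (Nat.mul_le_mul_left 2 (card_le_univ _))
  obtain ⟨x, rfl⟩ := Quot.exists_rep q
  calc #{y | Quot.mk _ y = Quot.mk _ x} ≤ #{x, f x} := card_le_card fun y hy => by
        rcases hf.quot_mk_eq_mk_iff.1 (mem_filter.1 hy).2.symm with rfl | rfl <;> simp
    _ ≤ 2 := card_le_two

end Involutive

variable [Finite α]

theorem two_mul_card_quot_le (f : α → α) :
    2 * Nat.card (Quot fun a b : α => f a = b) ≤ Nat.card α + Nat.card (fixedPoints f) := by
  classical
  have := Fintype.ofFinite α
  have := Fintype.ofFinite (Quot fun a b : α => f a = b)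
  let g : α ⊕ fixedPoints f → Quot fun a b : α => f a = b :=
    Sum.elim (Quot.mk _) fun x => Quot.mk _ x.1
  have hg : univ.image g = univ := by
    refine eq_univ_of_forall fun q => ?_
    obtain ⟨x, rfl⟩ := Quot.exists_rep q
    exact mem_image_of_mem g (mem_univ (.inl x))
  rw [← Nat.card_sum, Nat.card_eq_fintype_card, Nat.card_eq_fintype_card, ← card_univ,
    ← card_univ, ← hg]
  refine mul_card_image_le_card univ 2 fun q _ => ?_
  obtain ⟨x, rfl⟩ := Quot.exists_rep q
  have hfx : Quot.mk (fun a b : α => f a = b) (f x) = Quot.mk _ x :=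
    (Quot.sound (r := fun a b => f a = b) rfl).symm
  rw [Nat.succ_le_iff, one_lt_card]
  by_cases hx : f x = x
  · exact ⟨.inl x, by simp [g], .inr ⟨x, hx⟩, by simp [g], by simp⟩
  · exact ⟨.inl x, by simp [g], .inl (f x), by simp [g, hfx], by simpa [eq_comm] using hx⟩

end Function

abbrev BoolMatrix := Σ k l : ℕ, Matrix (Fin k) (Fin l) Bool

abbrev IncidenceMatrices (n : ℕ) := {A : BoolMatrix // IsIncidence A.2.2 ∧ numOnes A.2.2 = n}

section numOnes

variable {k l : ℕ} {M : Matrix (Fin k) (Fin l) Bool}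

theorem numOnes_transpose : numOnes M.transpose = numOnes M :=
  card_equiv (Equiv.prodComm _ _) fun _ => by simp only [mem_filter, mem_univ, true_and]; rfl

theorem le_numOnes_of_forall_exists_row (h : ∀ i, ∃ j, M i j = true) : k ≤ numOnes M := by
  simpa [numOnes] using card_le_card_of_surjOn (s := {p | M p.1 p.2 = true}) (t := univ) Prod.fst
    fun i _ => by simpa using h i

theorem le_numOnes_of_forall_exists_col (h : ∀ j, ∃ i, M i j = true) : l ≤ numOnes M := by
  simpa [numOnes] using card_le_card_of_surjOn (s := {p | M p.1 p.2 = true}) (t := univ) Prod.snd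
    fun j _ => by simpa using h j

end numOnes

namespace BoolMatrix

-- Indices are cast to `ℕ` so that the supports of matrices of different shapes can be compared.
def support (A : BoolMatrix) : Finset (ℕ × ℕ) :=
  (univ.filter fun p : Fin A.1 × Fin A.2.1 => A.2.2 p.1 p.2 = true).image
    fun p => ((p.1 : ℕ), (p.2 : ℕ))

theorem mk_mem_support {k l : ℕ} {M : Matrix (Fin k) (Fin l) Bool} {i : Fin k} {j : Fin l} :
    ((i : ℕ), (j : ℕ)) ∈ support ⟨k, l, M⟩ ↔ M i j = true := by
  simp [support, Fin.val_inj]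

theorem support_subset (A : BoolMatrix) : support A ⊆ range A.1 ×ˢ range A.2.1 := by
  intro p hp
  obtain ⟨q, -, rfl⟩ := mem_image.1 hp
  simp

theorem card_support (A : BoolMatrix) : #(support A) = numOnes A.2.2 :=
  card_image_of_injective _ fun p q h => by
    simpa [Prod.ext_iff, Fin.val_inj] using h

theorem support_trSigma (A : BoolMatrix) : support (trSigma A) = (support A).image Prod.swap := by
  obtain ⟨k, l, M⟩ := A
  show support ⟨l, k, M.transpose⟩ = _
  ext ⟨a, b⟩
  simp only [support, mem_image, mem_filter, mem_univ, true_and]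
  simp
  tauto

theorem ext_of_support {A B : BoolMatrix} (h₁ : A.1 = B.1) (h₂ : A.2.1 = B.2.1)
    (h : support A = support B) : A = B := by
  obtain ⟨k, l, M⟩ := A
  obtain ⟨k', l', M'⟩ := B
  dsimp only at h₁ h₂
  subst h₁ h₂
  suffices M = M' by rw [this]
  ext i j
  rw [Bool.eq_iff_iff, ← mk_mem_support, h, mk_mem_support]

end BoolMatrix

namespace IncidenceMatrices

variable {n : ℕ}

theorem fst_le (A : IncidenceMatrices n) : A.1.1 ≤ n :=
  (le_numOnes_of_forall_exists_row A.2.1.1).trans_eq A.2.2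

theorem snd_fst_le (A : IncidenceMatrices n) : A.1.2.1 ≤ n :=
  (le_numOnes_of_forall_exists_col A.2.1.2).trans_eq A.2.2

instance : Finite (IncidenceMatrices n) := by
  refine Finite.of_injective (β := Σ k l : Fin (n + 1), Matrix (Fin k) (Fin l) Bool)
    (fun A => ⟨⟨A.1.1, Nat.lt_succ_of_le A.fst_le⟩,
      ⟨A.1.2.1, Nat.lt_succ_of_le A.snd_fst_le⟩, A.1.2.2⟩) ?_
  rintro ⟨⟨k, l, M⟩, _⟩ ⟨⟨k', l', M'⟩, _⟩ h
  simp only [Sigma.mk.injEq, Fin.mk.injEq] at h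
  obtain ⟨rfl, h⟩ := h
  simp_all

def transpose (A : IncidenceMatrices n) : IncidenceMatrices n :=
  ⟨trSigma A.1, ⟨A.2.1.2, A.2.1.1⟩, numOnes_transpose.trans A.2.2⟩

theorem transpose_involutive : Function.Involutive (transpose (n := n)) := fun _ => rfl

def ofPerm (σ : Equiv.Perm (Fin n)) : IncidenceMatrices n :=
  ⟨⟨n, n, fun i j => decide (σ i = j)⟩,
    ⟨fun i => ⟨σ i, by simp⟩, fun j => ⟨σ.symm j, by simp⟩⟩,
    (card_nbij' Prod.fst (fun i => (i, σ i)) (by simp) (by simp)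
      (fun p hp => Prod.ext rfl (by simpa using hp)) fun _ _ => rfl).trans
      (card_fin n)⟩

theorem ofPerm_injective : Function.Injective (ofPerm (n := n)) := by
  intro σ τ h
  have hA : (⟨n, n, fun i j => decide (σ i = j)⟩ : BoolMatrix) =
      ⟨n, n, fun i j => decide (τ i = j)⟩ :=
    congrArg Subtype.val h
  obtain ⟨-, hA⟩ := Sigma.mk.inj_iff.1 hA
  have hM := eq_of_heq (Sigma.mk.inj_iff.1 (eq_of_heq hA)).2
  refine Equiv.ext fun i => ?_
  exact ((by simpa using congrFun (congrFun hM i) (σ i)) : τ i = σ i).symm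

theorem factorial_le_card (n : ℕ) : n ! ≤ Nat.card (IncidenceMatrices n) := by
  simpa [Nat.card_eq_fintype_card, Fintype.card_perm] using
    Nat.card_le_card_of_injective _ (ofPerm_injective (n := n))

end IncidenceMatrices

theorem Phi11_eq_card_quot (n : ℕ) :
    Phi11 n = Nat.card (Quot fun A B : IncidenceMatrices n => A.transpose = B) := by
  rw [Phi11]
  congr
  ext A B
  exact ⟨fun h => Subtype.ext (a1 := IncidenceMatrices.transpose A) h, congrArg Subtype.val⟩

section SymmetricSubsets

variable {α : Type*} [LinearOrder α] {E : Finset (α × α)}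

theorem swap_mem_iff_of_image_swap_eq (hE : E.image Prod.swap = E) {p : α × α} :
    p.swap ∈ E ↔ p ∈ E := by
  conv_lhs => rw [← hE]
  simp

theorem two_mul_card_filter_fst_lt_snd_le (hE : E.image Prod.swap = E) :
    2 * #{p ∈ E | p.1 < p.2} ≤ #E := by
  have hswap : #{p ∈ E | p.1 < p.2} = #{p ∈ E | p.2 < p.1} :=
    card_nbij' Prod.swap Prod.swap
      (fun p hp => by simpa [swap_mem_iff_of_image_swap_eq hE] using hp)
      (fun p hp => by simpa [swap_mem_iff_of_image_swap_eq hE] using hp)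
      (fun _ _ => rfl) fun _ _ => rfl
  calc 2 * #{p ∈ E | p.1 < p.2} = #{p ∈ E | p.1 < p.2} + #{p ∈ E | p.2 < p.1} := by
        rw [two_mul, ← hswap]
    _ ≤ #{p ∈ E | p.1 < p.2} + #{p ∈ E | ¬p.1 < p.2} := by
        gcongr 1
        exact card_le_card (monotone_filter_right E fun p _ (hp : p.2 < p.1) => not_lt_of_gt hp)
    _ = #E := card_filter_add_card_filter_not _

theorem card_symmetric_subsets_le (s : Finset α) (c : ℕ) :
    #{E ∈ (s ×ˢ s).powerset | E.image Prod.swap = E ∧ #E = c} ≤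
      2 ^ #s * #{T ∈ (s ×ˢ s).powerset | #T ≤ c / 2} := by
  calc _ ≤ #(s.diag.powerset ×ˢ {T ∈ (s ×ˢ s).powerset | #T ≤ c / 2}) := by
        refine card_le_card_of_injOn (fun E => ({p ∈ E | p.1 = p.2}, {p ∈ E | p.1 < p.2}))
          (fun E hE => ?_) (fun E hE E' hE' h => ?_)
        · simp only [mem_coe, mem_filter, mem_powerset, mem_product] at hE ⊢
          refine ⟨fun p hp => ?_, (filter_subset _ _).trans hE.1, ?_⟩
          · obtain ⟨hpE, hp⟩ := mem_filter.1 hp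
            exact mem_diag.2 ⟨(mem_product.1 (hE.1 hpE)).1, hp⟩
          · rw [Nat.le_div_iff_mul_le two_pos, mul_comm, ← hE.2.2]
            exact two_mul_card_filter_fst_lt_snd_le hE.2.1
        · simp only [mem_coe, mem_filter, mem_powerset] at hE hE'
          obtain ⟨hD, hU⟩ := Prod.ext_iff.1 h
          ext p
          rcases lt_trichotomy p.1 p.2 with hp | hp | hp
          · simpa [hp] using congrArg (p ∈ ·) hU
          · simpa [hp] using congrArg (p ∈ ·) hD
          · rw [← swap_mem_iff_of_image_swap_eq hE.2.1,
              ← swap_mem_iff_of_image_swap_eq hE'.2.1]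
            simpa [hp] using congrArg (p.swap ∈ ·) hU
    _ = _ := by rw [card_product, card_powerset, diag_card]

end SymmetricSubsets

theorem factorial_mul_choose_le_pow {N j m : ℕ} (hj : j ≤ m) (hm : m ≤ N) :
    m ! * N.choose j ≤ N ^ m :=
  calc m ! * N.choose j = m.descFactorial (m - j) * (j ! * N.choose j) := by
        rw [← Nat.factorial_mul_descFactorial (Nat.sub_le m j), Nat.sub_sub_self hj]
        ring
    _ = m.descFactorial (m - j) * N.descFactorial j := by
        rw [Nat.descFactorial_eq_factorial_mul_choose N j]
    _ ≤ N ^ (m - j) * N ^ j :=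
        Nat.mul_le_mul ((Nat.descFactorial_le_pow m _).trans (Nat.pow_le_pow_left hm _))
          (Nat.descFactorial_le_pow N j)
    _ = N ^ m := by rw [← pow_add, Nat.sub_add_cancel hj]

theorem factorial_mul_card_powerset_filter_card_le {α : Type*} (X : Finset α) {m : ℕ}
    (hm : m ≤ #X) : m ! * #{T ∈ X.powerset | #T ≤ m} ≤ (m + 1) * #X ^ m := by
  classical
  have hsub : {T ∈ X.powerset | #T ≤ m} ⊆ (range (m + 1)).biUnion X.powersetCard :=
    fun T hT => by
      obtain ⟨hTX, hTm⟩ := mem_filter.1 hT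
      exact mem_biUnion.2 ⟨#T, mem_range.2 (Nat.lt_succ_of_le hTm),
        mem_powersetCard.2 ⟨mem_powerset.1 hTX, rfl⟩⟩
  calc m ! * #{T ∈ X.powerset | #T ≤ m} ≤ m ! * ∑ j ∈ range (m + 1), (#X).choose j := by
        gcongr
        exact (card_le_card hsub).trans (card_biUnion_le.trans_eq (by simp [card_powersetCard]))
    _ = ∑ j ∈ range (m + 1), m ! * (#X).choose j := mul_sum ..
    _ ≤ ∑ _j ∈ range (m + 1), #X ^ m :=
        sum_le_sum fun j hj => factorial_mul_choose_le_pow (Nat.lt_succ_iff.1 (mem_range.1 hj)) hm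
    _ = (m + 1) * #X ^ m := by simp

namespace IncidenceMatrices

theorem card_fixedPoints_transpose_le (n : ℕ) :
    Nat.card (fixedPoints (transpose (n := n))) ≤
      (n + 1) * (2 ^ n * #{T ∈ (range n ×ˢ range n).powerset | #T ≤ n / 2}) := by
  set S := {E ∈ (range n ×ˢ range n).powerset | E.image Prod.swap = E ∧ #E = n}
  have hsymm (A : fixedPoints (transpose (n := n))) : trSigma A.1.1 = A.1.1 :=
    congrArg Subtype.val A.2
  let encode (A : fixedPoints (transpose (n := n))) : range (n + 1) ×ˢ S :=
    ⟨(A.1.1.1, A.1.1.support), mem_product.2 ⟨mem_range.2 (Nat.lt_succ_of_le A.1.fst_le),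
      mem_filter.2 ⟨mem_powerset.2 ((BoolMatrix.support_subset _).trans
          (product_subset_product (range_subset_range.2 A.1.fst_le)
            (range_subset_range.2 A.1.snd_fst_le))),
        by rw [← BoolMatrix.support_trSigma, hsymm],
        (BoolMatrix.card_support _).trans A.1.2.2⟩⟩⟩
  have hencode : Function.Injective encode := fun A B h => by
    obtain ⟨hk, hsupp⟩ := Prod.ext_iff.1 (Subtype.ext_iff.1 h)
    have hl (C : fixedPoints (transpose (n := n))) : C.1.1.2.1 = C.1.1.1 :=
      congrArg Sigma.fst (hsymm C)
    exact Subtype.ext <| Subtype.ext <|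
      BoolMatrix.ext_of_support hk (by rw [hl, hl]; exact hk) hsupp
  calc Nat.card (fixedPoints transpose) ≤ Nat.card (range (n + 1) ×ˢ S) :=
        Nat.card_le_card_of_injective encode hencode
    _ = (n + 1) * #S := by rw [Nat.card_eq_finsetCard, card_product, card_range]
    _ ≤ _ := by
        gcongr
        simpa using card_symmetric_subsets_le (range n) n

theorem factorial_half_mul_card_fixedPoints_transpose_le (n : ℕ) :
    (n / 2)! * Nat.card (fixedPoints (transpose (n := n))) ≤ 8 ^ n * n ^ n := by
  have hX : #(range n ×ˢ range n) = n ^ 2 := by simp [sq]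
  have hpow : (n ^ 2) ^ (n / 2) ≤ n ^ n := by
    rcases n.eq_zero_or_pos with rfl | hn
    · simp
    · rw [← pow_mul]
      exact Nat.pow_le_pow_right hn (Nat.mul_div_le n 2)
  set P := #{T ∈ (range n ×ˢ range n).powerset | #T ≤ n / 2}
  calc (n / 2)! * Nat.card (fixedPoints transpose) ≤ (n / 2)! * ((n + 1) * (2 ^ n * P)) := by
        gcongr
        exact card_fixedPoints_transpose_le n
    _ = (n + 1) * 2 ^ n * ((n / 2)! * P) := by ring
    _ ≤ (n + 1) * 2 ^ n * ((n / 2 + 1) * (n ^ 2) ^ (n / 2)) := by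
        refine Nat.mul_le_mul_left _ ?_
        rw [← hX]
        exact factorial_mul_card_powerset_filter_card_le _
          (hX ▸ (Nat.div_le_self n 2).trans (Nat.le_self_pow two_ne_zero n))
    _ ≤ 2 ^ n * 2 ^ n * (2 ^ n * n ^ n) := by
        have := Nat.lt_two_pow_self (n := n)
        gcongr <;> omega
    _ = 8 ^ n * n ^ n := by
        rw [show 8 = 2 * 2 * 2 from rfl, mul_pow, mul_pow]
        ring

end IncidenceMatrices

theorem tendsto_div_factorial_of_factorial_half_mul_le {c : ℕ → ℕ} (C : ℕ)
    (hc : ∀ n, (n / 2)! * c n ≤ C ^ n * n ^ n) :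
    Tendsto (fun n => (c n : ℝ) / n !) atTop (𝓝 0) := by
  set a : ℝ := C * Real.exp 1 + 1
  have ha : 1 ≤ a := by
    have : 0 ≤ (C : ℝ) * Real.exp 1 := by positivity
    linarith
  have hbound (n : ℕ) : (c n : ℝ) / n ! ≤ a * ((a ^ 2) ^ (n / 2) / (n / 2)!) := by
    have hc' : ((n / 2)! : ℝ) * c n ≤ C ^ n * n ^ n := by exact_mod_cast hc n
    calc (c n : ℝ) / n ! = ((n / 2)! * c n) / ((n / 2)! * n !) := by
          rw [mul_div_mul_left _ _ (by positivity)]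
      _ ≤ C ^ n * n ^ n / ((n / 2)! * n !) := by gcongr
      _ = C ^ n * ((n : ℝ) ^ n / n !) / (n / 2)! := by ring
      _ ≤ C ^ n * Real.exp 1 ^ n / (n / 2)! := by
          rw [Real.exp_one_pow]
          gcongr
          exact Real.pow_div_factorial_le_exp (n : ℝ) (by positivity) n
      _ ≤ a ^ n / (n / 2)! := by
          rw [← mul_pow]
          gcongr
          linarith
      _ ≤ a ^ (2 * (n / 2) + 1) / (n / 2)! :=
          div_le_div_of_nonneg_right (pow_le_pow_right₀ ha (by omega)) (by positivity)
      _ = a * ((a ^ 2) ^ (n / 2) / (n / 2)!) := by rw [pow_succ, pow_mul, mul_div_assoc']; ring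
  refine squeeze_zero (fun n => by positivity) hbound ?_
  simpa using ((FloorSemiring.tendsto_pow_div_factorial_atTop (a ^ 2)).comp
    (Nat.tendsto_div_const_atTop two_ne_zero)).const_mul a

theorem tendsto_div_half_mul_of_le_two_mul_le {a b c : ℕ → ℝ} (ha : ∀ n, 0 < a n)
    (hab : ∀ n, a n ≤ 2 * b n) (hbc : ∀ n, 2 * b n ≤ a n + c n)
    (hc : Tendsto (fun n => c n / a n) atTop (𝓝 0)) :
    Tendsto (fun n => b n / ((1 / 2) * a n)) atTop (𝓝 1) := by
  have hratio (n : ℕ) : b n / ((1 / 2) * a n) = 2 * b n / a n := by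
    field_simp
  refine tendsto_of_tendsto_of_tendsto_of_le_of_le tendsto_const_nhds
    (by simpa using hc.const_add 1) (fun n => ?_) (fun n => ?_)
  · rw [hratio, le_div_iff₀ (ha n), one_mul]
    exact hab n
  · rw [hratio, one_add_div (ha n).ne']
    exact div_le_div_of_nonneg_right (hbc n) (ha n).le

/-- `Φ₁₁(n) ∼ (1/2) F₁₁₁₁(n)` as `n → ∞`. -/
theorem Phi11_asymptotics :
    Filter.Tendsto (fun n : ℕ => (Phi11 n : ℝ) / ((1 / 2) * (F1111 n : ℝ)))
      Filter.atTop (nhds 1) := by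
  have hF (n : ℕ) : (n ! : ℝ) ≤ F1111 n := by
    exact_mod_cast IncidenceMatrices.factorial_le_card n
  have hfix := tendsto_div_factorial_of_factorial_half_mul_le 8
    IncidenceMatrices.factorial_half_mul_card_fixedPoints_transpose_le
  refine tendsto_div_half_mul_of_le_two_mul_le
    (c := fun n => (Nat.card (fixedPoints (IncidenceMatrices.transpose (n := n))) : ℝ))
    (fun n => (Nat.cast_pos.2 n.factorial_pos).trans_le (hF n)) (fun n => ?_) (fun n => ?_) ?_
  · rw [Phi11_eq_card_quot]
    exact_mod_cast IncidenceMatrices.transpose_involutive.card_le_two_mul_card_quot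
  · rw [Phi11_eq_card_quot]
    exact_mod_cast two_mul_card_quot_le IncidenceMatrices.transpose
  · exact squeeze_zero (fun n => by positivity)
      (fun n => div_le_div_of_nonneg_left (by positivity) (by positivity) (hF n)) hfix
end

section
/- For every n ≥ 1, I(n) ≤ S₁₁(n) ≤ I(n) · P(n) / n!, where I(n) is the number of involutions in the symmetric group Sₙ. -/
open scoped BigOperators

/-!
The permutation matrix of an involution is a symmetric incidence matrix with `n` ones, which gives
the lower bound. For the upper bound, label the `n` ones of a symmetric incidence matrix by `Fin n`
in all `n!` ways. Transposing cells induces an involution of the labels, and comparing row indices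
induces a total preorder on them. This pair determines the labelled matrix: every row is occupied,
so the preorder recovers the row of each label, and the involution then recovers its column.
-/

open Function Finset

section Cells

variable {α β : Type*}

abbrev Cells (M : Matrix α β Bool) : Type _ :=
  {p : α × β // M p.1 p.2 = true}

lemma card_cells {k l : ℕ} (M : Matrix (Fin k) (Fin l) Bool) :
    Fintype.card (Cells M) = numOnes M := by
  rw [numOnes, Fintype.card_subtype]

lemma surjective_cell_row {k l : ℕ} {M : Matrix (Fin k) (Fin l) Bool} (hM : IsIncidence M) :
    Surjective fun c : Cells M => c.1.1 := fun i =>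
  let ⟨j, hj⟩ := hM.1 i
  ⟨⟨(i, j), hj⟩, rfl⟩

def Cells.swap {M : Matrix α α Bool} (hM : ∀ i j, M i j = M j i) : Cells M ≃ Cells M where
  toFun c := ⟨c.1.swap, by rw [hM]; exact c.2⟩
  invFun c := ⟨c.1.swap, by rw [hM]; exact c.2⟩
  left_inv _ := rfl
  right_inv _ := rfl

lemma eq_of_cells_eq {M M' : Matrix α β Bool} {ι : Type*} (ℓ : ι ≃ Cells M) (ℓ' : ι ≃ Cells M')
    (h : ∀ a, (ℓ a).1 = (ℓ' a).1) : M = M' := by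
  ext i j
  rw [Bool.eq_iff_iff]
  constructor
  · intro hij
    simpa [← h, Equiv.apply_symm_apply] using (ℓ' (ℓ.symm ⟨(i, j), hij⟩)).2
  · intro hij
    simpa [h, Equiv.apply_symm_apply] using (ℓ (ℓ'.symm ⟨(i, j), hij⟩)).2

end Cells

lemma Fin.exists_orderIso_of_le_iff_le {ι : Type*} {k l : ℕ} {f : ι → Fin k} {g : ι → Fin l}
    (hf : Surjective f) (hg : Surjective g) (h : ∀ a b, f a ≤ f b ↔ g a ≤ g b) :
    ∃ e : Fin k ≃o Fin l, ∀ a, e (f a) = g a := by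
  set φ : Fin k → Fin l := g ∘ surjInv hf
  have hφ (a : ι) : φ (f a) = g a := by
    have hfa := surjInv_eq hf (f a)
    exact le_antisymm ((h _ _).1 hfa.le) ((h _ _).1 hfa.ge)
  have hmono : StrictMono φ := by
    intro i j hij
    rw [← surjInv_eq hf i, ← surjInv_eq hf j, lt_iff_not_ge, h, ← lt_iff_not_ge] at hij
    exact hij
  have hsurj : Surjective φ := fun j =>
    let ⟨a, ha⟩ := hg j
    ⟨f a, by rw [hφ, ha]⟩
  exact ⟨hmono.orderIsoOfSurjective φ hsurj, fun a => by simp [hφ]⟩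

section PermMatrix

variable {n : ℕ}

def permMatrix (σ : Equiv.Perm (Fin n)) : Matrix (Fin n) (Fin n) Bool :=
  Matrix.of fun i j => decide (σ i = j)

lemma permMatrix_isIncidence (σ : Equiv.Perm (Fin n)) : IsIncidence (permMatrix σ) :=
  ⟨fun i => ⟨σ i, by simp [permMatrix]⟩, fun j => ⟨σ.symm j, by simp [permMatrix]⟩⟩

lemma numOnes_permMatrix (σ : Equiv.Perm (Fin n)) : numOnes (permMatrix σ) = n := by
  have : (univ.filter fun p : Fin n × Fin n => permMatrix σ p.1 p.2 = true) =
      univ.image fun i => (i, σ i) := by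
    ext ⟨i, j⟩
    simp [permMatrix, eq_comm]
  rw [numOnes, this, card_image_of_injective _ fun a b hab => (Prod.ext_iff.mp hab).1,
    card_univ, Fintype.card_fin]

lemma permMatrix_symm {σ : Equiv.Perm (Fin n)} (hσ : σ * σ = 1) (i j : Fin n) :
    permMatrix σ i j = permMatrix σ j i := by
  have hσσ (x : Fin n) : σ (σ x) = x := by simpa using congrArg (· x) hσ
  simp only [permMatrix, Matrix.of_apply, decide_eq_decide]
  exact ⟨fun h => by rw [← h, hσσ], fun h => by rw [← h, hσσ]⟩

lemma permMatrix_injective : Injective (permMatrix (n := n)) := fun σ τ h =>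
  Equiv.ext fun i => by simpa [permMatrix] using congrFun (congrFun h i) (τ i)

end PermMatrix

abbrev SymIncidence (n : ℕ) : Type :=
  {A : Σ k : ℕ, Matrix (Fin k) (Fin k) Bool //
    (∀ i j, A.2 i j = A.2 j i) ∧ IsIncidence A.2 ∧ numOnes A.2 = n}

abbrev Involution (n : ℕ) : Type := {σ : Equiv.Perm (Fin n) // σ * σ = 1}

abbrev TotalPreorderRel (α : Type*) : Type _ :=
  {R : α → α → Prop //
    (∀ x, R x x) ∧ (∀ x y z, R x y → R y z → R x z) ∧ (∀ x y, R x y ∨ x = y ∨ R y x)}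

def TotalPreorderRel.comap {α β : Type*} [LinearOrder β] (f : α → β) : TotalPreorderRel α :=
  ⟨fun a b => f a ≤ f b, fun _ => le_rfl, fun _ _ _ => le_trans,
    fun a b => (le_total (f a) (f b)).imp id Or.inr⟩

abbrev LabelledSymIncidence (n : ℕ) : Type := Σ A : SymIncidence n, Fin n ≃ Cells A.1.2

namespace LabelledSymIncidence

variable {n : ℕ}

def row (x : LabelledSymIncidence n) (a : Fin n) : Fin x.1.1.1 :=
  (x.2 a).1.1

def involution (x : LabelledSymIncidence n) : Involution n :=
  ⟨(x.2.trans (Cells.swap x.1.2.1)).trans x.2.symm, Equiv.ext fun a => by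
    simp [Equiv.Perm.mul_apply, Cells.swap]⟩

lemma row_involution (x : LabelledSymIncidence n) (a : Fin n) :
    x.row (x.involution.1 a) = (x.2 a).1.2 := by
  simp [row, involution, Cells.swap]

def encode (x : LabelledSymIncidence n) : Involution n × TotalPreorderRel (Fin n) :=
  (x.involution, TotalPreorderRel.comap x.row)

lemma encode_injective : Injective (encode (n := n)) := by
  rintro ⟨⟨⟨k, M⟩, hM⟩, ℓ⟩ ⟨⟨⟨k', M'⟩, hM'⟩, ℓ'⟩ h
  obtain ⟨hσ, hR⟩ := Prod.ext_iff.mp h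
  obtain ⟨e, he⟩ := Fin.exists_orderIso_of_le_iff_le
    ((surjective_cell_row hM.2.1).comp ℓ.surjective)
    ((surjective_cell_row hM'.2.1).comp ℓ'.surjective)
    fun a b => iff_of_eq (congrFun (congrFun (congrArg Subtype.val hR) a) b)
  obtain rfl : k = k' := Fin.equiv_iff_eq.mp ⟨e.toEquiv⟩
  have hrow (a : Fin n) : (ℓ a).1.1 = (ℓ' a).1.1 :=
    Fin.ext <| (Fin.coe_orderIso_apply e _).symm.trans (congrArg Fin.val (he a))
  have hcol (a : Fin n) : (ℓ a).1.2 = (ℓ' a).1.2 := by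
    rw [← row_involution ⟨⟨⟨k, M⟩, hM⟩, ℓ⟩ a, ← row_involution ⟨⟨⟨k, M'⟩, hM'⟩, ℓ'⟩ a]
    exact (congrArg (fun σ : Involution n => (ℓ (σ.1 a)).1.1) hσ).trans (hrow _)
  have hcell (a : Fin n) : (ℓ a).1 = (ℓ' a).1 := Prod.ext (hrow a) (hcol a)
  obtain rfl := eq_of_cells_eq ℓ ℓ' hcell
  obtain rfl : ℓ = ℓ' := Equiv.ext fun a => Subtype.ext (hcell a)
  rfl

lemma nonempty_labelling (A : SymIncidence n) :
    Nonempty (Fin n ≃ Cells A.1.2) :=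
  ⟨Fintype.equivOfCardEq (by rw [card_cells, A.2.2.2, Fintype.card_fin])⟩

instance : Finite (LabelledSymIncidence n) :=
  Finite.of_injective _ encode_injective

instance : Finite (SymIncidence n) :=
  Finite.of_surjective Sigma.fst fun A =>
    let ⟨ℓ⟩ := nonempty_labelling A
    ⟨⟨A, ℓ⟩, rfl⟩

lemma card_eq : Nat.card (LabelledSymIncidence n) = S11 n * n.factorial := by
  have := Fintype.ofFinite (SymIncidence n)
  have hfib (A : SymIncidence n) : Nat.card (Fin n ≃ Cells A.1.2) = n.factorial := by
    obtain ⟨ℓ⟩ := nonempty_labelling A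
    rw [Nat.card_eq_fintype_card, Fintype.card_equiv ℓ, Fintype.card_fin]
  rw [Nat.card_sigma, Finset.sum_congr rfl fun A _ => hfib A, sum_const, card_univ, smul_eq_mul,
    ← Nat.card_eq_fintype_card, S11]

end LabelledSymIncidence

lemma S11_mul_factorial_le (n : ℕ) : S11 n * n.factorial ≤ numInvolutions n * numPreorders n := by
  rw [← LabelledSymIncidence.card_eq]
  exact (Nat.card_le_card_of_injective _ LabelledSymIncidence.encode_injective).trans_eq
    (Nat.card_prod _ _)

lemma numInvolutions_le_S11 (n : ℕ) : numInvolutions n ≤ S11 n := by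
  let f : Involution n → SymIncidence n := fun σ =>
    ⟨⟨n, permMatrix σ.1⟩, permMatrix_symm σ.2, permMatrix_isIncidence σ.1, numOnes_permMatrix σ.1⟩
  refine Nat.card_le_card_of_injective f fun σ τ h => Subtype.ext (permMatrix_injective ?_)
  exact eq_of_heq (Sigma.mk.inj_iff.mp (congrArg Subtype.val h)).2

theorem S11_bounds_general (n : ℕ) :
    numInvolutions n ≤ S11 n ∧
      (S11 n : ℚ) ≤ (numInvolutions n : ℚ) * (numPreorders n : ℚ) / (n.factorial : ℚ) := by
  refine ⟨numInvolutions_le_S11 n, ?_⟩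
  rw [le_div_iff₀ (by positivity)]
  exact_mod_cast S11_mul_factorial_le n

/-- `I(n) ≤ S₁₁(n) ≤ I(n)·P(n)/n!` for every `n ≥ 1`. -/
theorem S11_bounds (n : ℕ) (hn : 1 ≤ n) :
    numInvolutions n ≤ S11 n ∧
      (S11 n : ℚ) ≤ (numInvolutions n : ℚ) * (numPreorders n : ℚ) / (n.factorial : ℚ) :=
  S11_bounds_general n
end

section
/- For every n ≥ 1, S₁₁(n) = Σ_{k=0}^∞ 2^{-(k+1)} · Σ_{j=0}^{⌊n/2⌋} C(C(k,2), j) · C(k, n − 2j). -/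
open scoped BigOperators

/-!
Write `μ(i, n)` for the number of symmetric `i × i` incidence matrices with `n` ones (`muSym`);
such a matrix has `i ≤ n`, so `S₁₁(n) = ∑_{i ≤ n} μ(i, n)`. A symmetric zero-one `k × k` matrix
with `n` ones is determined by its set of nonzero rows together with a symmetric incidence matrix
on that set, so their number is `sSym k n = ∑ᵢ C(k, i) μ(i, n)`. It is also determined by its ones
strictly above the diagonal (say `j` of them, each counted twice) and its `n - 2j` ones on the
diagonal, so `sSym k n = ∑ⱼ C(C(k, 2), j) C(k, n - 2j)`. Since `∑ₖ C(k, i) / 2^(k+1) = 1` for every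
`i`, weighting the first identity by `2^-(k+1)` and summing over `k` returns `∑ᵢ μ(i, n) = S₁₁(n)`.
-/

open Finset

open scoped Classical in
lemma sSym_eq_card (k n : ℕ) :
    sSym k n = #{M : Matrix (Fin k) (Fin k) Bool | (∀ a b, M a b = M b a) ∧ numOnes M = n} := by
  rw [sSym, Nat.card_eq_fintype_card, Fintype.card_subtype]

open scoped Classical in
lemma muSym_eq_card (m n : ℕ) :
    muSym m n = #{N : Matrix (Fin m) (Fin m) Bool |
      (∀ a b, N a b = N b a) ∧ IsIncidence N ∧ numOnes N = n} := by
  rw [muSym, Nat.card_eq_fintype_card, Fintype.card_subtype]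

lemma le_numOnes_of_rows_nonzero {k l : ℕ} {M : Matrix (Fin k) (Fin l) Bool}
    (hM : ∀ i, ∃ j, M i j = true) : k ≤ numOnes M := by
  have := card_le_card_of_surjOn Prod.fst (s := {p : Fin k × Fin l | M p.1 p.2 = true})
    (t := univ) fun i _ => by
      obtain ⟨j, hj⟩ := hM i
      exact ⟨(i, j), by simpa using hj, rfl⟩
  simpa [numOnes] using this

lemma muSym_eq_zero_of_lt {i n : ℕ} (h : n < i) : muSym i n = 0 := by
  rw [muSym, Nat.card_eq_zero]
  exact .inl ⟨fun ⟨M, _, hM, hn⟩ => (hn ▸ le_numOnes_of_rows_nonzero hM.1).not_gt h⟩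

lemma S11_eq_sum_muSym (n : ℕ) : S11 n = ∑ i ∈ range (n + 1), muSym i n := by
  let e : {A : Σ k, Matrix (Fin k) (Fin k) Bool //
      (∀ i j, A.2 i j = A.2 j i) ∧ IsIncidence A.2 ∧ numOnes A.2 = n} ≃
      Σ i : Fin (n + 1), {M : Matrix (Fin i) (Fin i) Bool //
        (∀ a b, M a b = M b a) ∧ IsIncidence M ∧ numOnes M = n} :=
    { toFun := fun A => ⟨⟨A.1.1, by
          have := le_numOnes_of_rows_nonzero A.2.2.1.1; omega⟩, A.1.2, A.2⟩
      invFun := fun B => ⟨⟨B.1, B.2.1⟩, B.2.2⟩ }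
  rw [S11, Nat.card_congr e, Nat.card_sigma]
  exact Fin.sum_univ_eq_sum_range (muSym · n) _

section RowSupport

open scoped Classical

variable {m k : ℕ}

noncomputable def rowSupport {l : ℕ} (M : Matrix (Fin k) (Fin l) Bool) : Finset (Fin k) :=
  {i | ∃ j, M i j = true}

noncomputable def extendMatrix (f : Fin m ↪ Fin k) (N : Matrix (Fin m) (Fin m) Bool) :
    Matrix (Fin k) (Fin k) Bool :=
  fun i j => decide (∃ a b, f a = i ∧ f b = j ∧ N a b = true)

@[simp]
lemma extendMatrix_apply_apply (f : Fin m ↪ Fin k) (N : Matrix (Fin m) (Fin m) Bool)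
    (a b : Fin m) : extendMatrix f N (f a) (f b) = N a b := by
  simp [extendMatrix]

lemma submatrix_extendMatrix (f : Fin m ↪ Fin k) (N : Matrix (Fin m) (Fin m) Bool) :
    (extendMatrix f N).submatrix f f = N := by
  ext a b
  simp

lemma extendMatrix_submatrix (f : Fin m ↪ Fin k) {M : Matrix (Fin k) (Fin k) Bool}
    (hM : ∀ i j, M i j = true → i ∈ Set.range f ∧ j ∈ Set.range f) :
    extendMatrix f (M.submatrix f f) = M := by
  ext i j
  cases h : M i j
  · refine decide_eq_false ?_
    rintro ⟨a, b, rfl, rfl, hab⟩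
    simp [h] at hab
  · obtain ⟨⟨a, rfl⟩, ⟨b, rfl⟩⟩ := hM _ _ h
    simpa using h

lemma extendMatrix_symm (f : Fin m ↪ Fin k) {N : Matrix (Fin m) (Fin m) Bool}
    (hN : ∀ a b, N a b = N b a) (i j : Fin k) : extendMatrix f N i j = extendMatrix f N j i := by
  simp only [extendMatrix]
  congr 1
  exact propext ⟨fun ⟨a, b, ha, hb, h⟩ => ⟨b, a, hb, ha, hN a b ▸ h⟩,
    fun ⟨a, b, ha, hb, h⟩ => ⟨b, a, hb, ha, hN a b ▸ h⟩⟩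

lemma numOnes_extendMatrix (f : Fin m ↪ Fin k) (N : Matrix (Fin m) (Fin m) Bool) :
    numOnes (extendMatrix f N) = numOnes N := by
  rw [numOnes, numOnes, ← card_map (f.prodMap f)]
  congr 1
  ext ⟨i, j⟩
  simp only [extendMatrix, exists_and_left, decide_eq_true_eq, mem_filter, mem_univ, true_and,
    mem_map, Function.Embedding.coe_prodMap, Prod.exists, Prod.map_apply, Prod.mk.injEq]
  exact ⟨fun ⟨a, ha, b, hb, h⟩ => ⟨a, b, h, ha, hb⟩, fun ⟨a, b, h, ha, hb⟩ => ⟨a, ha, b, hb, h⟩⟩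

lemma rowSupport_extendMatrix (f : Fin m ↪ Fin k) {N : Matrix (Fin m) (Fin m) Bool}
    (hN : ∀ a, ∃ b, N a b = true) : ↑(rowSupport (extendMatrix f N)) = Set.range f := by
  ext i
  simp only [rowSupport, extendMatrix, exists_and_left, decide_eq_true_eq, ↓existsAndEq,
    true_and, coe_filter, mem_univ, Set.mem_ofPred_eq, Set.mem_range]
  exact ⟨fun ⟨a, ha, _⟩ => ⟨a, ha⟩, fun ⟨a, ha⟩ => ⟨a, ha, hN a⟩⟩

lemma mem_rowSupport_of_symm {M : Matrix (Fin k) (Fin k) Bool} (hM : ∀ a b, M a b = M b a)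
    {i j : Fin k} (h : M i j = true) : i ∈ rowSupport M ∧ j ∈ rowSupport M := by
  simp only [rowSupport, mem_filter, mem_univ, true_and]
  exact ⟨⟨j, h⟩, ⟨i, hM i j ▸ h⟩⟩

lemma isIncidence_of_symm {M : Matrix (Fin k) (Fin k) Bool} (hM : ∀ a b, M a b = M b a)
    (h : ∀ i, ∃ j, M i j = true) : IsIncidence M :=
  ⟨h, fun j => (h j).imp fun i hi => hM i j ▸ hi⟩

lemma card_symm_rowSupport_eq_muSym (f : Fin m ↪ Fin k) {S : Finset (Fin k)}
    (hf : Set.range f = S) (n : ℕ) :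
    #{M : Matrix (Fin k) (Fin k) Bool |
      ((∀ a b, M a b = M b a) ∧ numOnes M = n) ∧ rowSupport M = S} = muSym m n := by
  have hsupp : ∀ M : Matrix (Fin k) (Fin k) Bool, (∀ a b, M a b = M b a) → rowSupport M = S →
      ∀ i j, M i j = true → i ∈ Set.range f ∧ j ∈ Set.range f := by
    intro M hM hS i j h
    rw [hf, ← hS]
    exact mem_rowSupport_of_symm hM h
  rw [muSym_eq_card]
  refine card_nbij' (fun M => M.submatrix f f) (extendMatrix f) ?_ ?_ ?_ ?_
  · intro M hM
    simp only [coe_filter, Set.mem_ofPred_eq, mem_univ, true_and] at hM ⊢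
    obtain ⟨⟨hsym, hn⟩, hS⟩ := hM
    refine ⟨fun a b => hsym _ _, isIncidence_of_symm (fun a b => hsym _ _) fun a => ?_, ?_⟩
    · have : f a ∈ rowSupport M := by rw [← mem_coe, hS, ← hf]; exact ⟨a, rfl⟩
      obtain ⟨j, hj⟩ := by simpa [rowSupport] using this
      obtain ⟨-, b, rfl⟩ := hsupp M hsym hS _ _ hj
      exact ⟨b, hj⟩
    · rw [← numOnes_extendMatrix f, extendMatrix_submatrix f (hsupp M hsym hS), hn]
  · intro N hN
    simp only [coe_filter, Set.mem_ofPred_eq, mem_univ, true_and] at hN ⊢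
    refine ⟨⟨extendMatrix_symm f hN.1, by rw [numOnes_extendMatrix, hN.2.2]⟩, ?_⟩
    exact coe_injective (by rw [rowSupport_extendMatrix f hN.2.1.1, hf])
  · intro M hM
    simp only [coe_filter, Set.mem_ofPred_eq, mem_univ, true_and] at hM
    exact extendMatrix_submatrix f (hsupp M hM.1.1 hM.2)
  · intro N _
    exact submatrix_extendMatrix f N

lemma sSym_eq_sum_muSym (k n : ℕ) :
    sSym k n = ∑ i ∈ range (n + 1), k.choose i * muSym i n := by
  calc sSym k n
      = ∑ S ∈ (univ : Finset (Fin k)).powerset, #{M : Matrix (Fin k) (Fin k) Bool |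
          ((∀ a b, M a b = M b a) ∧ numOnes M = n) ∧ rowSupport M = S} := by
        rw [sSym_eq_card, card_eq_sum_card_fiberwise (f := rowSupport) fun M _ =>
          mem_powerset.2 (subset_univ _)]
        simp only [filter_filter]
    _ = ∑ S ∈ (univ : Finset (Fin k)).powerset, muSym #S n :=
        sum_congr rfl fun S _ => card_symm_rowSupport_eq_muSym
          (S.orderEmbOfFin rfl).toEmbedding (S.range_orderEmbOfFin rfl) n
    _ = ∑ i ∈ range (k + 1), k.choose i * muSym i n := by
        rw [sum_powerset_apply_card (muSym · n), card_univ, Fintype.card_fin]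
        rfl
    _ = ∑ i ∈ range (min k n + 1), k.choose i * muSym i n := by
        refine (sum_subset (range_subset_range.2 (by omega)) fun i hi hi' => ?_).symm
        rw [mem_range] at hi hi'
        rw [muSym_eq_zero_of_lt (by omega), mul_zero]
    _ = ∑ i ∈ range (n + 1), k.choose i * muSym i n := by
        refine sum_subset (range_subset_range.2 (by omega)) fun i hi hi' => ?_
        rw [mem_range] at hi hi'
        rw [Nat.choose_eq_zero_of_lt (by omega), zero_mul]

end RowSupport

lemma card_filter_two_mul_card_add_card_eq {α β : Type*} (T : Finset α) (U : Finset β) (n : ℕ) :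
    #{p ∈ T.powerset ×ˢ U.powerset | 2 * #p.1 + #p.2 = n} =
      ∑ j ∈ range (n / 2 + 1), (#T).choose j * (#U).choose (n - 2 * j) := by
  rw [card_eq_sum_card_fiberwise (f := fun p => #p.1) (t := range (n / 2 + 1))]
  · refine sum_congr rfl fun j hj => ?_
    rw [← card_powersetCard, ← card_powersetCard, ← card_product]
    congr 1
    ext ⟨A, B⟩
    simp only [mem_range] at hj
    simp only [mem_filter, mem_product, mem_powerset, mem_powersetCard]
    grind
  · intro p hp
    simp only [coe_filter, Set.mem_ofPred_eq] at hp
    simp only [coe_range, Set.mem_Iio]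
    omega

section SymmetricMatrices

variable {k : ℕ}

def upperOnes (M : Matrix (Fin k) (Fin k) Bool) : Finset (Fin k × Fin k) :=
  {p | p.1 < p.2 ∧ M p.1 p.2 = true}

def diagOnes (M : Matrix (Fin k) (Fin k) Bool) : Finset (Fin k) :=
  {i | M i i = true}

def ofUpperDiag (E : Finset (Fin k × Fin k)) (D : Finset (Fin k)) : Matrix (Fin k) (Fin k) Bool :=
  fun i j => decide ((i, j) ∈ E ∨ (j, i) ∈ E ∨ i = j ∧ i ∈ D)

lemma numOnes_eq_of_symm {M : Matrix (Fin k) (Fin k) Bool} (hM : ∀ a b, M a b = M b a) :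
    numOnes M = 2 * #(upperOnes M) + #(diagOnes M) := by
  have hlower : #{p : Fin k × Fin k | p.2 < p.1 ∧ M p.1 p.2 = true} = #(upperOnes M) :=
    card_nbij' Prod.swap Prod.swap (by intro p; simp [upperOnes, hM p.1 p.2])
      (by intro p; simp [upperOnes, hM p.1 p.2]) (fun _ _ => rfl) (fun _ _ => rfl)
  have hdiag : #{p : Fin k × Fin k | p.1 = p.2 ∧ M p.1 p.2 = true} = #(diagOnes M) :=
    card_nbij' Prod.fst (fun i => (i, i)) (by rintro ⟨i, j⟩; simp +contextual [diagOnes])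
      (by intro i; simp [diagOnes]) (by rintro ⟨i, j⟩; simp +contextual) (fun _ _ => rfl)
  have hsplit : ∀ p : Fin k × Fin k, M p.1 p.2 = true ↔
      (p.1 < p.2 ∧ M p.1 p.2 = true) ∨ (p.2 < p.1 ∧ M p.1 p.2 = true) ∨
        (p.1 = p.2 ∧ M p.1 p.2 = true) := fun p => by grind
  rw [numOnes, filter_congr fun p _ => hsplit p, filter_or, filter_or,
    card_union_of_disjoint, card_union_of_disjoint, hlower, hdiag, upperOnes]
  · ring
  · exact disjoint_filter.2 fun p _ h1 h2 => h1.1.ne' h2.1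
  · rw [← filter_or]
    exact disjoint_filter.2 fun p _ h1 h2 => by grind

lemma ofUpperDiag_symm (E : Finset (Fin k × Fin k)) (D : Finset (Fin k)) (i j : Fin k) :
    ofUpperDiag E D i j = ofUpperDiag E D j i := by
  simp only [ofUpperDiag]
  grind

lemma upperOnes_ofUpperDiag {E : Finset (Fin k × Fin k)}
    (hE : E ⊆ ({p | p.1 < p.2} : Finset (Fin k × Fin k))) (D : Finset (Fin k)) :
    upperOnes (ofUpperDiag E D) = E := by
  ext ⟨i, j⟩
  have hij := @hE (i, j)
  have hji := @hE (j, i)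
  simp only [upperOnes, ofUpperDiag, mem_filter, mem_univ, true_and, decide_eq_true_eq]
  grind

lemma diagOnes_ofUpperDiag {E : Finset (Fin k × Fin k)}
    (hE : E ⊆ ({p | p.1 < p.2} : Finset (Fin k × Fin k))) (D : Finset (Fin k)) :
    diagOnes (ofUpperDiag E D) = D := by
  ext i
  have hii := @hE (i, i)
  simp only [diagOnes, ofUpperDiag, mem_filter, mem_univ, true_and, decide_eq_true_eq]
  grind

lemma ofUpperDiag_upperOnes_diagOnes {M : Matrix (Fin k) (Fin k) Bool}
    (hM : ∀ a b, M a b = M b a) : ofUpperDiag (upperOnes M) (diagOnes M) = M := by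
  ext i j
  have hji := hM j i
  simp only [ofUpperDiag, upperOnes, diagOnes, mem_filter, mem_univ, true_and]
  cases h : M i j <;> grind

lemma sSym_eq_sum_choose (k n : ℕ) :
    sSym k n = ∑ j ∈ range (n / 2 + 1), (k.choose 2).choose j * k.choose (n - 2 * j) := by
  have hlt : #{p : Fin k × Fin k | p.1 < p.2} = k.choose 2 := by
    simpa using Fintype.card_product_filter_lt (α := Fin k)
  calc sSym k n
      = #{p ∈ ({p | p.1 < p.2} : Finset (Fin k × Fin k)).powerset ×ˢ univ.powerset |
          2 * #p.1 + #p.2 = n} := by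
        rw [sSym_eq_card]
        refine card_nbij' (fun M => (upperOnes M, diagOnes M)) (fun p => ofUpperDiag p.1 p.2)
          ?_ ?_ ?_ ?_
        · intro M hM
          simp only [coe_filter, Set.mem_ofPred_eq, mem_univ, true_and] at hM
          simp only [coe_filter, Set.mem_ofPred_eq, mem_product, mem_powerset]
          refine ⟨⟨fun p hp => ?_, subset_univ _⟩, ?_⟩
          · simp only [upperOnes, mem_filter] at hp ⊢
            exact ⟨mem_univ _, hp.2.1⟩
          · rw [← numOnes_eq_of_symm hM.1, hM.2]
        · rintro ⟨E, D⟩ hED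
          simp only [coe_filter, Set.mem_ofPred_eq, mem_product, mem_powerset] at hED
          simp only [coe_filter, Set.mem_ofPred_eq, mem_univ, true_and]
          refine ⟨ofUpperDiag_symm E D, ?_⟩
          rw [numOnes_eq_of_symm (ofUpperDiag_symm E D), upperOnes_ofUpperDiag hED.1.1,
            diagOnes_ofUpperDiag hED.1.1, hED.2]
        · intro M hM
          simp only [coe_filter, Set.mem_ofPred_eq, mem_univ, true_and] at hM
          exact ofUpperDiag_upperOnes_diagOnes hM.1
        · rintro ⟨E, D⟩ hED
          simp only [coe_filter, Set.mem_ofPred_eq, mem_product, mem_powerset] at hED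
          simp only [upperOnes_ofUpperDiag hED.1.1, diagOnes_ofUpperDiag hED.1.1]
    _ = _ := by rw [card_filter_two_mul_card_add_card_eq, hlt, card_univ, Fintype.card_fin]

end SymmetricMatrices

lemma hasSum_choose_div_two_pow (i : ℕ) :
    HasSum (fun k : ℕ => 1 / 2 ^ (k + 1) * (k.choose i : ℝ)) 1 := by
  have h := (hasSum_choose_mul_geometric_of_norm_lt_one i (r := (1 / 2 : ℝ))
    (by norm_num)).mul_left ((1 / 2) ^ (i + 1))
  have hvanish : ∑ k ∈ range i, 1 / 2 ^ (k + 1) * (k.choose i : ℝ) = 0 :=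
    sum_eq_zero fun k hk => by
      rw [Nat.choose_eq_zero_of_lt (mem_range.1 hk), Nat.cast_zero, mul_zero]
  have hterm : (fun k : ℕ => (1 / 2 : ℝ) ^ (i + 1) * ((k + i).choose i * (1 / 2) ^ k)) =
      fun k => 1 / 2 ^ (k + i + 1) * ((k + i).choose i : ℝ) := funext fun k => by
    simp only [one_div, inv_pow]; ring
  have hsum : (1 / 2 : ℝ) ^ (i + 1) * (1 / (1 - 1 / 2) ^ (i + 1)) = 1 := by norm_num
  refine (hasSum_nat_add_iff' i).mp ?_
  rw [hvanish, sub_zero]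
  rwa [hterm, hsum] at h

theorem S11_eq_tsum_general (n : ℕ) :
    (S11 n : ℝ) =
      ∑' k : ℕ, (1 / 2 ^ (k + 1)) *
        ∑ j ∈ Finset.range (n / 2 + 1),
          ((k.choose 2).choose j : ℝ) * (k.choose (n - 2 * j) : ℝ) := by
  have hsSym : ∀ k, 1 / 2 ^ (k + 1) * (sSym k n : ℝ) =
      ∑ i ∈ range (n + 1), 1 / 2 ^ (k + 1) * (k.choose i : ℝ) * muSym i n := fun k => by
    rw [sSym_eq_sum_muSym, Nat.cast_sum, mul_sum]
    exact sum_congr rfl fun i _ => by push_cast; ring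
  have key : HasSum (fun k : ℕ => 1 / 2 ^ (k + 1) * (sSym k n : ℝ)) (S11 n) := by
    simp only [hsSym, S11_eq_sum_muSym, Nat.cast_sum]
    simpa using hasSum_sum fun i _ => (hasSum_choose_div_two_pow i).mul_right (muSym i n : ℝ)
  rw [← key.tsum_eq]
  congr with k
  rw [sSym_eq_sum_choose]
  push_cast
  rfl

/-- `S₁₁(n) = Σ_{k≥0} 2^{-(k+1)} Σ_{j=0}^{⌊n/2⌋} C(C(k,2),j) C(k,n-2j)`. -/
theorem S11_eq_tsum (n : ℕ) (hn : 1 ≤ n) :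
    (S11 n : ℝ) =
      ∑' k : ℕ, (1 / 2 ^ (k + 1)) *
        ∑ j ∈ Finset.range (n / 2 + 1),
          ((k.choose 2).choose j : ℝ) * (k.choose (n - 2 * j) : ℝ) :=
  S11_eq_tsum_general n
end

section
/- For every ε > 0 there exists n₀(ε) such that for all n ≥ n₀(ε), F₀₀₀₁(n) ≥ (n / (log n)^{2+ε})ⁿ. -/
open scoped BigOperators

/-!
For `v ≥ 1` and `S ⊆ [v] × [v]`, the `(v + 1) × 2v` matrix with block form `[I S; 0 𝟙]` is an
incidence matrix with distinct rows and `2v + |S|` ones, and distinct `S` give distinct matrices.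
A class under row and column permutations contains at most `(v + 1)! (2v)!` of them, so
`C(v², t) ≤ (v + 1)! (2v)! F₀₀₀₁(2v + t)`. With `C(N, t) ≥ (N / t)^t` this gives
`F₀₀₀₁(n) ≥ (v² / n)^n / n^{6v}` whenever `2v ≤ n ≤ v²`. Choosing `v = ⌈n / (log n)^{1 + ε/4}⌉`
makes `(v² / n)^n ≥ (n / (log n)^{2 + ε/2})^n`, while `n^{6v} ≤ e^{12 n}` is swallowed by the
spare factor `(log n)^{εn/2}` once `log log n ≥ 24 / ε`.
-/

open Finset Filter Real
open scoped Nat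

theorem Nat.div_pow_le_choose {α : Type*} [Field α] [LinearOrder α] [IsStrictOrderedRing α]
    {N t : ℕ} (h : t ≤ N) : ((N : α) / t) ^ t ≤ N.choose t := by
  induction t generalizing N with
  | zero => simp
  | succ t ih =>
    obtain ⟨N, rfl⟩ := Nat.exists_eq_add_of_le' (Nat.one_le_of_lt h)
    have htN : t ≤ N := by omega
    have hstep :
        ((N + 1 : ℕ) : α) / (t + 1 : ℕ) * (N.choose t : α) = (N + 1).choose (t + 1) := by
      rw [div_mul_eq_mul_div, div_eq_iff (by positivity)]
      exact_mod_cast Nat.add_one_mul_choose_eq N t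
    rw [← hstep, _root_.pow_succ']
    gcongr
    rcases t.eq_zero_or_pos with rfl | ht
    · simp
    calc (((N + 1 : ℕ) : α) / (t + 1 : ℕ)) ^ t ≤ ((N : α) / t) ^ t := by
          refine pow_le_pow_left₀ (by positivity) ?_ t
          rw [div_le_div_iff₀ (by positivity) (by positivity)]
          push_cast
          have : (t : α) ≤ N := by exact_mod_cast htN
          nlinarith
      _ ≤ N.choose t := ih htN

lemma numOnes_eq_sum {k l : ℕ} (M : Matrix (Fin k) (Fin l) Bool) :
    numOnes M = ∑ i, ∑ j, if M i j = true then 1 else 0 := by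
  rw [numOnes, card_filter, Fintype.sum_prod_type]

def frameMatrix (v : ℕ) (S : Finset (Fin v × Fin v)) : Matrix (Fin (v + 1)) (Fin (v + v)) Bool :=
  Matrix.of <| Fin.snoc (α := fun _ => Fin (v + v) → Bool)
    (fun a => Fin.append (fun b => decide (a = b)) (fun b => decide ((a, b) ∈ S)))
    (Fin.append (fun _ => false) (fun _ => true))

section frameMatrix

variable {v : ℕ} (S : Finset (Fin v × Fin v)) (a b : Fin v)

@[simp] lemma frameMatrix_castSucc_castAdd :
    frameMatrix v S a.castSucc (Fin.castAdd v b) = decide (a = b) := by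
  simp [frameMatrix]

@[simp] lemma frameMatrix_castSucc_addNat :
    frameMatrix v S a.castSucc (b.addNat v) = decide ((a, b) ∈ S) := by
  simp [frameMatrix, ← Fin.natAdd_eq_addNat]

@[simp] lemma frameMatrix_last_castAdd :
    frameMatrix v S (Fin.last v) (Fin.castAdd v b) = false := by
  simp [frameMatrix]

@[simp] lemma frameMatrix_last_addNat : frameMatrix v S (Fin.last v) (b.addNat v) = true := by
  simp [frameMatrix, ← Fin.natAdd_eq_addNat]

lemma frameMatrix_injective : Function.Injective (frameMatrix v) := by
  intro S S' h
  ext ⟨a, b⟩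
  simpa using congrFun (congrFun h a.castSucc) (b.addNat v)

lemma numOnes_frameMatrix : numOnes (frameMatrix v S) = v + v + #S := by
  have hS : #S = ∑ a, ∑ b, if (a, b) ∈ S then 1 else 0 := by
    rw [← Fintype.sum_prod_type (f := fun p => if p ∈ S then 1 else 0), ← card_filter,
      filter_mem_eq_inter, univ_inter]
  simp only [numOnes_eq_sum, Fin.sum_univ_castSucc, Fin.sum_univ_add]
  simp [hS, sum_add_distrib]
  ring

lemma isIncidence_frameMatrix (hv : 0 < v) : IsIncidence (frameMatrix v S) := by
  constructor
  · intro i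
    induction i using Fin.lastCases with
    | last => exact ⟨_, frameMatrix_last_addNat S ⟨0, hv⟩⟩
    | cast a => exact ⟨Fin.castAdd v a, by simp⟩
  · intro j
    induction j using Fin.addCases with
    | left b => exact ⟨b.castSucc, by simp⟩
    | right b => exact ⟨Fin.last v, by simp⟩

lemma eq_of_frameMatrix_row_eq (i i' : Fin (v + 1))
    (h : ∀ j, frameMatrix v S i j = frameMatrix v S i' j) : i = i' := by
  induction i using Fin.lastCases with
  | last =>
    induction i' using Fin.lastCases with
    | last => rfl
    | cast a' => simpa using h (Fin.castAdd v a')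
  | cast a =>
    induction i' using Fin.lastCases with
    | last => simpa using h (Fin.castAdd v a)
    | cast a' => simpa [eq_comm] using h (Fin.castAdd v a)

end frameMatrix

def IsReindexing (x y : Σ k l : ℕ, Matrix (Fin k) (Fin l) Bool) : Prop :=
  ∃ σ : Equiv.Perm (Fin x.1), ∃ τ : Equiv.Perm (Fin x.2.1),
    y = ⟨x.1, x.2.1, Matrix.of fun i j => x.2.2 (σ i) (τ j)⟩

lemma isReindexing_mk_iff {k l : ℕ} {M M' : Matrix (Fin k) (Fin l) Bool} :
    IsReindexing ⟨k, l, M⟩ ⟨k, l, M'⟩ ↔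
      ∃ σ : Equiv.Perm (Fin k), ∃ τ : Equiv.Perm (Fin l),
        M' = Matrix.of fun i j => M (σ i) (τ j) := by
  simp [IsReindexing]

lemma isReindexing_equivalence : Equivalence IsReindexing where
  refl _ := ⟨1, 1, rfl⟩
  symm := by
    rintro ⟨k, l, M⟩ _ ⟨σ, τ, rfl⟩
    refine ⟨σ⁻¹, τ⁻¹, ?_⟩
    congr
    ext i j
    simp
  trans := by
    rintro ⟨k, l, M⟩ _ _ ⟨σ, τ, rfl⟩ ⟨σ', τ', rfl⟩
    exact ⟨σ * σ', τ * τ', rfl⟩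

def rowDistinctIncidence (n : ℕ) : Set (Σ k l : ℕ, Matrix (Fin k) (Fin l) Bool) :=
  {A | IsIncidence A.2.2 ∧ numOnes A.2.2 = n ∧
    ∀ i i' : Fin A.1, (∀ j, A.2.2 i j = A.2.2 i' j) → i = i'}

lemma F0001_eq_card_quot (n : ℕ) :
    F0001 n = Nat.card (Quot fun x y : rowDistinctIncidence n => IsReindexing x.1 y.1) := rfl

lemma nrows_le_numOnes {k l : ℕ} {M : Matrix (Fin k) (Fin l) Bool}
    (h : ∀ i, ∃ j, M i j = true) : k ≤ numOnes M := by
  have := card_le_card_of_surjOn (s := {p : Fin k × Fin l | M p.1 p.2 = true}) (t := univ)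
    Prod.fst fun i _ ↦ by
      obtain ⟨j, hj⟩ := h i
      exact ⟨(i, j), by simpa using hj, rfl⟩
  simpa [numOnes] using this

lemma ncols_le_numOnes {k l : ℕ} {M : Matrix (Fin k) (Fin l) Bool}
    (h : ∀ j, ∃ i, M i j = true) : l ≤ numOnes M := by
  have := card_le_card_of_surjOn (s := {p : Fin k × Fin l | M p.1 p.2 = true}) (t := univ)
    Prod.snd fun j _ ↦ by
      obtain ⟨i, hi⟩ := h j
      exact ⟨(i, j), by simpa using hi, rfl⟩
  simpa [numOnes] using this

lemma finite_rowDistinctIncidence (n : ℕ) : (rowDistinctIncidence n).Finite := by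
  refine (Set.finite_range fun A : Σ k l : Fin (n + 1), Matrix (Fin k) (Fin l) Bool ↦
    (⟨A.1, A.2.1, A.2.2⟩ : Σ k l : ℕ, Matrix (Fin k) (Fin l) Bool)).subset ?_
  rintro ⟨k, l, M⟩ ⟨⟨hrows, hcols⟩, hn : numOnes M = n, -⟩
  have hk : k ≤ n := hn ▸ nrows_le_numOnes hrows
  have hl : l ≤ n := hn ▸ ncols_le_numOnes hcols
  exact ⟨⟨⟨k, by omega⟩, ⟨l, by omega⟩, M⟩, rfl⟩

lemma card_le_factorial_mul_F0001 {k l n : ℕ} (s : Finset (Matrix (Fin k) (Fin l) Bool))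
    (hs : ∀ M ∈ s, ⟨k, l, M⟩ ∈ rowDistinctIncidence n) : #s ≤ k ! * l ! * F0001 n := by
  classical
  let Q := Quot fun x y : rowDistinctIncidence n => IsReindexing x.1 y.1
  have : Finite (rowDistinctIncidence n) := (finite_rowDistinctIncidence n).to_subtype
  let _ : Fintype Q := Fintype.ofFinite Q
  let cls : s → Q := fun M ↦ Quot.mk _ ⟨⟨k, l, M⟩, hs M M.2⟩
  have hfiber (M₀ : s) : #{M ∈ s.attach | cls M = cls M₀} ≤ k ! * l ! := by
    calc #{M ∈ s.attach | cls M = cls M₀}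
        ≤ #((univ : Finset (Equiv.Perm (Fin k) × Equiv.Perm (Fin l))).image
            fun p ↦ Matrix.of fun i j ↦ M₀.1 (p.1 i) (p.2 j)) := by
          refine card_le_card_of_injOn Subtype.val (fun M hM ↦ ?_) Subtype.val_injective.injOn
          have hrel := (isReindexing_equivalence.comap Subtype.val).eqvGen_iff.mp
            (Quot.eqvGen_exact (mem_filter.mp hM).2)
          obtain ⟨σ, τ, h⟩ := isReindexing_mk_iff.mp (isReindexing_equivalence.symm hrel)
          exact mem_image.mpr ⟨(σ, τ), mem_univ _, h.symm⟩
      _ ≤ k ! * l ! := card_image_le.trans (by simp [Fintype.card_perm])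
  calc #s = #s.attach := s.card_attach.symm
    _ ≤ k ! * l ! * #(s.attach.image cls) :=
        card_le_mul_card_image _ _ fun _ hc ↦ by
          obtain ⟨M₀, -, rfl⟩ := mem_image.mp hc
          exact hfiber M₀
    _ ≤ k ! * l ! * F0001 n := by
        rw [F0001_eq_card_quot, Nat.card_eq_fintype_card]
        exact Nat.mul_le_mul_left _ (card_le_univ _)

lemma choose_le_factorial_mul_F0001 {v : ℕ} (hv : 0 < v) (t : ℕ) :
    (v * v).choose t ≤ (v + 1)! * (v + v)! * F0001 (v + v + t) := by
  have h := card_le_factorial_mul_F0001 ((powersetCard t univ).image (frameMatrix v))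
    fun M hM ↦ by
      obtain ⟨S, hS, rfl⟩ := mem_image.mp hM
      exact ⟨isIncidence_frameMatrix S hv,
        by rw [numOnes_frameMatrix, mem_powersetCard_univ.mp hS], eq_of_frameMatrix_row_eq S⟩
  rwa [card_image_of_injective _ frameMatrix_injective, card_powersetCard, Finset.card_univ,
    Fintype.card_prod, Fintype.card_fin] at h

lemma sq_div_pow_le_F0001_mul_pow {v n : ℕ} (hv : 0 < v) (h2v : 2 * v ≤ n) (hn : n ≤ v ^ 2) :
    ((v : ℝ) ^ 2 / n) ^ n ≤ F0001 n * (n : ℝ) ^ (6 * v) := by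
  obtain ⟨t, rfl⟩ : ∃ t, n = v + v + t := ⟨n - 2 * v, by omega⟩
  set n := v + v + t
  have hn0 : (0 : ℝ) < n := by positivity
  have hfactorial : (v + 1)! * (v + v)! ≤ n ^ (4 * v) :=
    calc (v + 1)! * (v + v)! ≤ (v + v) ^ (v + v) * (v + v) ^ (v + v) :=
          Nat.mul_le_mul ((Nat.factorial_le (by omega)).trans (Nat.factorial_le_pow _))
            (Nat.factorial_le_pow _)
      _ ≤ n ^ (v + v) * n ^ (v + v) := by gcongr <;> omega
      _ = n ^ (4 * v) := by ring
  have hbinom : ((v : ℝ) ^ 2 / n) ^ t ≤ (v * v).choose t := by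
    rcases t.eq_zero_or_pos with rfl | ht
    · simp
    calc ((v : ℝ) ^ 2 / n) ^ t ≤ ((v * v : ℕ) / t : ℝ) ^ t := by
          push_cast
          rw [← sq]
          gcongr
          exact_mod_cast (by omega : t ≤ n)
      _ ≤ (v * v).choose t :=
          Nat.div_pow_le_choose ((Nat.le_add_left t _).trans (hn.trans (sq v).le))
  have hv_le : ((v : ℝ) ^ 2 / n) ^ (v + v) ≤ (n : ℝ) ^ (v + v) := by
    gcongr
    rw [div_le_iff₀ hn0, ← sq]
    gcongr
    exact_mod_cast (by omega : v ≤ n)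
  calc ((v : ℝ) ^ 2 / n) ^ n = ((v : ℝ) ^ 2 / n) ^ t * ((v : ℝ) ^ 2 / n) ^ (v + v) := by
        rw [← pow_add, Nat.add_comm]
    _ ≤ (v * v).choose t * (n : ℝ) ^ (v + v) := by gcongr
    _ ≤ ((v + 1)! * (v + v)! * F0001 n : ℕ) * (n : ℝ) ^ (v + v) := by
        gcongr
        exact_mod_cast choose_le_factorial_mul_F0001 hv t
    _ ≤ ((n ^ (4 * v) * F0001 n : ℕ) : ℝ) * (n : ℝ) ^ (v + v) := by
        gcongr
    _ = F0001 n * (n : ℝ) ^ (6 * v) := by push_cast; ring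

lemma exists_frame_size {ε : ℝ} (hε : 0 < ε) {n : ℕ} (hlog : 4 ≤ log n)
    (hpow : log n ^ (2 + ε / 2) ≤ n) :
    ∃ v : ℕ, 0 < v ∧ 2 * v ≤ n ∧ n ≤ v ^ 2 ∧
      log n - (1 + ε / 4) * log (log n) ≤ log v ∧ v * log n ≤ 2 * n := by
  have hn4 : (4 : ℝ) ≤ n := hlog.trans (log_le_self n.cast_nonneg)
  have hn0 : (0 : ℝ) < n := by linarith
  have hLa : log n ≤ log n ^ (1 + ε / 4) := self_le_rpow_of_one_le (by linarith) (by linarith)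
  have hLa2 : (log n ^ (1 + ε / 4)) ^ 2 = log n ^ (2 + ε / 2) := by
    rw [← rpow_natCast, ← rpow_mul (by linarith)]
    norm_num
    ring_nf
  set w := n / log n ^ (1 + ε / 4)
  have hw : 0 < w := by positivity
  have hwv : w ≤ ⌈w⌉₊ := Nat.le_ceil w
  have hvw : (⌈w⌉₊ : ℝ) < w + 1 := Nat.ceil_lt_add_one hw.le
  have hw4 : w ≤ n / 4 := div_le_div_of_nonneg_left hn0.le (by norm_num) (hlog.trans hLa)
  refine ⟨⌈w⌉₊, Nat.ceil_pos.mpr hw, ?_, ?_, ?_, ?_⟩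
  · have : (2 * ⌈w⌉₊ : ℝ) ≤ n := by linarith
    exact_mod_cast this
  · have : (n : ℝ) ≤ ⌈w⌉₊ ^ 2 :=
      calc (n : ℝ) = n ^ 2 / n := by field_simp
        _ ≤ n ^ 2 / (log n ^ (1 + ε / 4)) ^ 2 := by rw [hLa2]; gcongr
        _ = w ^ 2 := by rw [div_pow]
        _ ≤ ⌈w⌉₊ ^ 2 := by gcongr
    exact_mod_cast this
  · rw [← log_rpow (by linarith), ← log_div hn0.ne' (by positivity)]
    exact log_le_log hw hwv
  · have : w * log n ≤ n := by
      rw [div_mul_eq_mul_div, div_le_iff₀ (by positivity)]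
      gcongr
    nlinarith [log_le_self n.cast_nonneg]

lemma F0001_lower_bound_of_log_large {ε : ℝ} (hε : 0 < ε) {n : ℕ} (hlog : 4 ≤ log n)
    (hloglog : 24 / ε ≤ log (log n)) (hpow : log n ^ (2 + ε / 2) ≤ n) :
    ((n : ℝ) / log n ^ ((2 : ℝ) + ε)) ^ n ≤ F0001 n := by
  obtain ⟨v, hv, h2v, hnv, hlogv, hvlog⟩ := exists_frame_size hε hlog hpow
  have hn0 : (0 : ℝ) < n := by linarith [log_le_self n.cast_nonneg]
  have key :
      ((n : ℝ) / log n ^ ((2 : ℝ) + ε)) ^ n * (n : ℝ) ^ (6 * v) ≤ ((v : ℝ) ^ 2 / n) ^ n := by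
    rw [← log_le_log_iff (by positivity) (by positivity), log_mul (by positivity) (by positivity),
      log_pow, log_pow, log_pow, log_div hn0.ne' (by positivity), log_rpow (by linarith),
      log_div (by positivity) hn0.ne', log_pow]
    have hlogv' := mul_le_mul_of_nonneg_left hlogv hn0.le
    have hspare : 24 * (n : ℝ) ≤ ε * log (log n) * n := by
      rw [div_le_iff₀' hε] at hloglog
      nlinarith
    push_cast
    nlinarith
  calc ((n : ℝ) / log n ^ ((2 : ℝ) + ε)) ^ n ≤ ((v : ℝ) ^ 2 / n) ^ n / (n : ℝ) ^ (6 * v) :=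
        (le_div_iff₀ (by positivity)).mpr key
    _ ≤ F0001 n := div_le_of_le_mul₀ (by positivity) (by positivity)
        (sq_div_pow_le_F0001_mul_pow hv h2v hnv)

/-- for every `ε > 0`, `F₀₀₀₁(n) ≥ (n/(log n)^{2+ε})ⁿ` for all large `n`. -/
theorem F0001_lower_bound (ε : ℝ) (hε : 0 < ε) :
    ∃ n₀ : ℕ, ∀ n : ℕ, n₀ ≤ n →
      ((n : ℝ) / Real.log n ^ ((2 : ℝ) + ε)) ^ n ≤ (F0001 n : ℝ) := by
  have hlog : Tendsto (fun n : ℕ ↦ log n) atTop atTop :=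
    tendsto_log_atTop.comp tendsto_natCast_atTop_atTop
  have hpow : ∀ᶠ n : ℕ in atTop, log n ^ (2 + ε / 2) ≤ n := by
    filter_upwards [tendsto_natCast_atTop_atTop.eventually
      (isLittleO_log_rpow_rpow_atTop (2 + ε / 2) one_pos).eventuallyLE] with n hn
    simpa using (le_norm_self _).trans hn
  obtain ⟨n₀, h⟩ := eventually_atTop.mp ((hlog.eventually_ge_atTop 4).and
    (((tendsto_log_atTop.comp hlog).eventually_ge_atTop (24 / ε)).and hpow))
  exact ⟨n₀, fun n hn ↦
    F0001_lower_bound_of_log_large hε (h n hn).1 (h n hn).2.1 (h n hn).2.2⟩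
end
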